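/- arXiv:2511.14298 — 7 statements merged into one kernel-verified Lean document; each statement's English description precedes it below -/
import Mathlib

section
/- For every n and every nonempty finite poset P, the maximum size of a family 𝓕 of subsets of [n] that admits a proper coloring with no rainbow copy of P equals the maximum size of a family 𝓖 of subsets of [n] that contains no copy of any finite poset Q such that Q minimally rainbow forces P. -/
/-- A (strong/induced) copy of the poset `P` in the poset `Q`: an injective map
reflecting and preserving the order. -/
def IsCopy {P Q : Type*} [PartialOrder P] [PartialOrder Q] (f : P → Q) : Prop :=
  Function.Injective f ∧ ∀ p p' : P, f p ≤ f p' ↔ p ≤ p'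

/-- A proper coloring of a poset: distinct comparable elements get distinct colors. -/
def ProperColoring {Q : Type*} [PartialOrder Q] (c : Q → ℕ) : Prop :=
  ∀ q q' : Q, q ≠ q' → (q ≤ q' ∨ q' ≤ q) → c q ≠ c q'

/-- `Q` rainbow forces `P`: every proper coloring of `Q` admits a rainbow copy of `P`. -/
def RainbowForces (Q : Type*) [PartialOrder Q] (P : Type*) [PartialOrder P] : Prop :=
  ∀ c : Q → ℕ, ProperColoring c → ∃ f : P → Q, IsCopy f ∧ Function.Injective (c ∘ f)

/-- `Q` minimally rainbow forces `P`: `Q` rainbow forces `P` but no one-element-deleted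
induced subposet of `Q` does. -/
def MinRainbowForces (Q : Type*) [PartialOrder Q] (P : Type*) [PartialOrder P] : Prop :=
  RainbowForces Q P ∧ ∀ q : Q, ¬RainbowForces {x : Q // x ≠ q} P

/-- A copy of the poset `P` in the family `𝓕` of subsets of `[n]`. -/
def FamilyCopy (n : ℕ) (𝓕 : Finset (Finset (Fin n))) (P : Type*) [PartialOrder P]
    (f : P → Finset (Fin n)) : Prop :=
  (∀ p, f p ∈ 𝓕) ∧ Function.Injective f ∧ ∀ p p' : P, f p ⊆ f p' ↔ p ≤ p'

/-- A proper coloring of a family of sets: distinct members related by inclusion get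
distinct colors. -/
def FamilyProperColoring (n : ℕ) (𝓕 : Finset (Finset (Fin n)))
    (c : Finset (Fin n) → ℕ) : Prop :=
  ∀ A ∈ 𝓕, ∀ B ∈ 𝓕, A ≠ B → A ⊆ B → c A ≠ c B

/-- `𝓕` admits a proper coloring with no rainbow copy of `P`. -/
def AvoidsRainbow (n : ℕ) (P : Type*) [PartialOrder P] (𝓕 : Finset (Finset (Fin n))) : Prop :=
  ∃ c : Finset (Fin n) → ℕ, FamilyProperColoring n 𝓕 c ∧
    ¬∃ f : P → Finset (Fin n), FamilyCopy n 𝓕 P f ∧ Function.Injective (c ∘ f)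

/-- A bundled finite poset. -/
structure FinPoset where
  carrier : Type
  [po : PartialOrder carrier]
  [ft : Fintype carrier]

attribute [instance] FinPoset.po FinPoset.ft

/-!
A family `𝓕` of subsets of `[n]`, ordered by inclusion, is itself a finite poset, and a proper
coloring of `𝓕` with no rainbow copy of `P` is exactly a witness that `𝓕` does not rainbow force
`P`. Rainbow forcing passes upward along copies, and every finite poset that rainbow forces `P`
contains a minimal one (delete points while forcing survives). Hence `𝓕` admits such a coloring
iff it contains no copy of a poset minimally rainbow forcing `P`: the two sets of sizes coincide.
-/

lemma IsCopy.comp {A B C : Type*} [PartialOrder A] [PartialOrder B] [PartialOrder C]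
    {f : A → B} {g : B → C} (hf : IsCopy f) (hg : IsCopy g) : IsCopy (g ∘ f) :=
  ⟨hg.1.comp hf.1, fun _ _ => (hg.2 _ _).trans (hf.2 _ _)⟩

lemma isCopy_subtype_val {Q : Type*} [PartialOrder Q] (p : Q → Prop) :
    IsCopy (Subtype.val : Subtype p → Q) :=
  ⟨Subtype.val_injective, fun _ _ => Subtype.coe_le_coe⟩

lemma ProperColoring.comp_isCopy {Q Q' : Type*} [PartialOrder Q] [PartialOrder Q']
    {c : Q → ℕ} {g : Q' → Q} (hc : ProperColoring c) (hg : IsCopy g) :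
    ProperColoring (c ∘ g) := fun q q' hne hcomp =>
  hc (g q) (g q') (hg.1.ne hne) (hcomp.imp (hg.2 _ _).2 (hg.2 _ _).2)

section RainbowForces

variable {P : Type*} [PartialOrder P]

lemma RainbowForces.of_isCopy {Q Q' : Type*} [PartialOrder Q] [PartialOrder Q']
    (h : RainbowForces Q' P) {g : Q' → Q} (hg : IsCopy g) : RainbowForces Q P := by
  intro c hc
  obtain ⟨f, hf, hrainbow⟩ := h (c ∘ g) (hc.comp_isCopy hg)
  exact ⟨g ∘ f, hf.comp hg, hrainbow⟩

theorem RainbowForces.exists_minRainbowForces {Q : Type} [PartialOrder Q] [Finite Q]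
    (h : RainbowForces Q P) :
    ∃ Q' : FinPoset, MinRainbowForces Q'.carrier P ∧ ∃ g : Q'.carrier → Q, IsCopy g := by
  induction hN : Nat.card Q using Nat.strong_induction_on generalizing Q with
  | _ N ih =>
  by_cases hmin : ∀ q : Q, ¬RainbowForces {x : Q // x ≠ q} P
  · exact ⟨@FinPoset.mk Q _ (Fintype.ofFinite Q), ⟨h, hmin⟩, id, Function.injective_id,
      fun _ _ => Iff.rfl⟩
  · push Not at hmin
    obtain ⟨q, hq⟩ := hmin
    obtain ⟨Q', hQ', g, hg⟩ := ih _ (hN ▸ Finite.card_subtype_lt (x := q) (by simp)) hq rfl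
    exact ⟨Q', hQ', Subtype.val ∘ g, hg.comp (isCopy_subtype_val _)⟩

theorem rainbowForces_iff_exists_minRainbowForces {Q : Type} [PartialOrder Q] [Finite Q] :
    RainbowForces Q P ↔
      ∃ Q' : FinPoset, MinRainbowForces Q'.carrier P ∧ ∃ g : Q'.carrier → Q, IsCopy g :=
  ⟨RainbowForces.exists_minRainbowForces, fun ⟨_, hQ', _, hg⟩ => hQ'.1.of_isCopy hg⟩

end RainbowForces

section Family

variable {n : ℕ} {𝓕 : Finset (Finset (Fin n))} {P : Type*} [PartialOrder P]

lemma IsCopy.familyCopy {g : P → 𝓕} (hg : IsCopy g) :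
    FamilyCopy n 𝓕 P (fun p => (g p : Finset (Fin n))) :=
  ⟨fun p => (g p).2, Subtype.val_injective.comp hg.1, hg.2⟩

lemma FamilyCopy.isCopy_codRestrict {f : P → Finset (Fin n)} (hf : FamilyCopy n 𝓕 P f) :
    IsCopy (fun p => (⟨f p, hf.1 p⟩ : 𝓕)) :=
  ⟨fun _ _ h => hf.2.1 (congrArg Subtype.val h), hf.2.2⟩

lemma exists_familyCopy_iff_exists_isCopy :
    (∃ f, FamilyCopy n 𝓕 P f) ↔ ∃ g : P → 𝓕, IsCopy g :=
  ⟨fun ⟨_, hf⟩ => ⟨_, hf.isCopy_codRestrict⟩, fun ⟨_, hg⟩ => ⟨_, hg.familyCopy⟩⟩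

theorem avoidsRainbow_iff_not_rainbowForces : AvoidsRainbow n P 𝓕 ↔ ¬RainbowForces 𝓕 P := by
  constructor
  · rintro ⟨c, hc, hnone⟩ hforces
    have hc' : ProperColoring (c ∘ Subtype.val : 𝓕 → ℕ) := fun A B hne hcomp => by
      rcases hcomp with hAB | hBA
      · exact hc A A.2 B B.2 (Subtype.val_injective.ne hne) hAB
      · exact (hc B B.2 A A.2 (Subtype.val_injective.ne hne.symm) hBA).symm
    obtain ⟨g, hg, hrainbow⟩ := hforces _ hc'
    exact hnone ⟨_, hg.familyCopy, hrainbow⟩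
  · intro hforces
    obtain ⟨c₀, hc₀, hnone⟩ : ∃ c₀ : 𝓕 → ℕ, ProperColoring c₀ ∧
        ¬∃ g : P → 𝓕, IsCopy g ∧ Function.Injective (c₀ ∘ g) := by
      simpa only [RainbowForces, not_forall, exists_prop] using hforces
    classical
    let c : Finset (Fin n) → ℕ := fun A => if hA : A ∈ 𝓕 then c₀ ⟨A, hA⟩ else 0
    refine ⟨c, fun A hA B hB hne hAB => ?_, fun ⟨f, hf, hrainbow⟩ => ?_⟩
    · simpa [c, hA, hB] using hc₀ ⟨A, hA⟩ ⟨B, hB⟩ (by simpa using hne) (Or.inl hAB)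
    · refine hnone ⟨_, hf.isCopy_codRestrict, fun p p' h => hrainbow ?_⟩
      simpa [c, hf.1 p, hf.1 p'] using h

end Family

theorem statement0_general (n : ℕ) (P : Type) [PartialOrder P] :
    sSup {m : ℕ | ∃ 𝓕 : Finset (Finset (Fin n)), 𝓕.card = m ∧ AvoidsRainbow n P 𝓕} =
    sSup {m : ℕ | ∃ 𝓖 : Finset (Finset (Fin n)), 𝓖.card = m ∧
      ∀ Q : FinPoset, MinRainbowForces Q.carrier P →
        ¬∃ f : Q.carrier → Finset (Fin n), FamilyCopy n 𝓖 Q.carrier f} := by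
  congr 1
  ext m
  refine exists_congr fun 𝓕 => and_congr_right fun _ => ?_
  simp only [avoidsRainbow_iff_not_rainbowForces, rainbowForces_iff_exists_minRainbowForces,
    exists_familyCopy_iff_exists_isCopy, not_exists, not_and]

/-- For every `n` and every nonempty finite poset `P`, the maximum size of a
family of subsets of `[n]` admitting a proper coloring with no rainbow copy of `P` equals the
maximum size of a family of subsets of `[n]` containing no copy of any finite poset `Q` that
minimally rainbow forces `P`. -/
theorem statement0 (n : ℕ) (P : Type) [PartialOrder P] [Fintype P] [Nonempty P] :
    sSup {m : ℕ | ∃ 𝓕 : Finset (Finset (Fin n)), 𝓕.card = m ∧ AvoidsRainbow n P 𝓕} =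
    sSup {m : ℕ | ∃ 𝓖 : Finset (Finset (Fin n)), 𝓖.card = m ∧
      ∀ Q : FinPoset, MinRainbowForces Q.carrier P →
        ¬∃ f : Q.carrier → Finset (Fin n), FamilyCopy n 𝓖 Q.carrier f} :=
  statement0_general n P
end

section
/- For every finite poset P on k elements, there exists a finite poset Q of cardinality k + (the number of unordered pairs of distinct incomparable elements of P) such that Q rainbow forces P. -/
/-!
Fix an injective `rank` on `P` and replace each `p` by a chain of length `1 + m p`, where `m p`
counts the elements of smaller rank incomparable to `p`; the lexicographic sum of these chains
over `P` has `|P| + (number of incomparable pairs)` elements. Picking one element from each chain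
always gives a copy of `P`, on which a proper colouring already separates comparable elements.
The chain over `p` carries `1 + m p` distinct colours, so picking in increasing rank we can always
avoid the colours already picked for the `m p` earlier elements incomparable to `p`.
-/

open Finset Function

section Ranked

variable {V W : Type*} [Fintype V] [LinearOrder W] {rank : V → W}

theorem exists_listColoring_of_card_lt {α : Type*} [DecidableEq α] (hrank : Injective rank)
    (adj : V → V → Prop) [DecidableRel adj] (L : V → Finset α)
    (hL : ∀ v, #{u | rank u < rank v ∧ adj u v} < #(L v)) :
    ∃ g : V → α, (∀ v, g v ∈ L v) ∧ ∀ u v, rank u < rank v → adj u v → g u ≠ g v := by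
  let _ : LinearOrder V := LinearOrder.lift' rank hrank
  suffices ∀ s : Finset V, ∃ g : V → α, (∀ v, g v ∈ L v) ∧
      ∀ u ∈ s, ∀ v ∈ s, rank u < rank v → adj u v → g u ≠ g v by
    obtain ⟨g, hgL, hg⟩ := this univ
    exact ⟨g, hgL, fun u v => hg u (mem_univ u) v (mem_univ v)⟩
  intro s
  induction s using Finset.induction_on_max with
  | empty =>
    have hne (v : V) : (L v).Nonempty := card_pos.mp (Nat.zero_lt_of_lt (hL v))
    exact ⟨fun v => (hne v).choose, fun v => (hne v).choose_spec, by simp⟩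
  | insert a s hs ih =>
    obtain ⟨g, hgL, hg⟩ := ih
    obtain ⟨x, hxL, hx⟩ : ∃ x ∈ L a, x ∉ image g {u | rank u < rank a ∧ adj u a} :=
      exists_mem_notMem_of_card_lt_card (card_image_le.trans_lt (hL a))
    have hxa (u : V) (hu : rank u < rank a) (hadj : adj u a) : g u ≠ x :=
      fun h => hx (mem_image.mpr ⟨u, by simp [hu, hadj], h⟩)
    refine ⟨update g a x, fun v => ?_, ?_⟩
    · rcases eq_or_ne v a with rfl | hv
      · simpa using hxL
      · simpa [hv] using hgL v
    · simp only [mem_insert]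
      rintro u (rfl | hu) v (rfl | hv) huv hadj
      · exact absurd huv (lt_irrefl _)
      · exact absurd huv (hs v hv).not_gt
      · simpa [(hs u hu).ne] using hxa u huv hadj
      · simpa [(hs u hu).ne, (hs v hv).ne] using hg u hu v hv huv hadj

theorem card_pairs_eq_sum_card_rank_lt [DecidableEq V] (hrank : Injective rank)
    (r : V → V → Prop) [DecidableRel r] :
    #{s : Finset V | #s = 2 ∧ ∀ x ∈ s, ∀ y ∈ s, x ≠ y → r x y} =
      ∑ v, #{u | rank u < rank v ∧ r u v ∧ r v u} := by
  rw [← card_sigma, eq_comm]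
  refine card_bij (fun (x : Σ _ : V, V) _ => ({x.2, x.1} : Finset V)) ?_ ?_ ?_
  · simp only [mem_sigma, mem_filter, mem_univ, true_and]
    rintro ⟨v, u⟩ ⟨huv, hr, hr'⟩
    refine ⟨card_pair (ne_of_apply_ne rank huv.ne), ?_⟩
    simp only [mem_insert, mem_singleton]
    rintro x (rfl | rfl) y (rfl | rfl) hxy <;> first | exact absurd rfl hxy | assumption
  · simp only [mem_sigma, mem_filter, mem_univ, true_and]
    rintro ⟨v, u⟩ ⟨huv, -⟩ ⟨v', u'⟩ ⟨huv', -⟩ heq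
    have : ({u, v} : Set V) = {u', v'} := by rw [← coe_pair, ← coe_pair, heq]
    rcases Set.pair_eq_pair_iff.mp this with ⟨rfl, rfl⟩ | ⟨rfl, rfl⟩
    · rfl
    · exact absurd (huv.trans huv') (lt_irrefl _)
  · simp only [mem_sigma, mem_filter, mem_univ, true_and]
    rintro s ⟨hs, hr⟩
    obtain ⟨x, y, hxy, rfl⟩ := card_eq_two.mp hs
    have hx : x ∈ ({x, y} : Finset V) := mem_insert_self x {y}
    have hy : y ∈ ({x, y} : Finset V) := mem_insert_of_mem (mem_singleton_self y)
    rcases (hrank.ne hxy).lt_or_gt with h | h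
    · exact ⟨⟨y, x⟩, ⟨h, hr x hx y hy hxy, hr y hy x hx hxy.symm⟩, rfl⟩
    · exact ⟨⟨x, y⟩, ⟨h, hr y hy x hx hxy.symm, hr x hx y hy hxy⟩, pair_comm y x⟩

end Ranked

section Copies

variable {P Q : Type*} [PartialOrder P] [PartialOrder Q]

theorem isCopy_toLex_sigmaMk {α : P → Type*} [∀ p, PartialOrder (α p)] (s : ∀ p, α p) :
    IsCopy (fun p => (toLex ⟨p, s p⟩ : Σₗ p, α p)) := by
  refine ⟨fun p q h => congrArg Sigma.fst (toLex.injective h), fun p q => ?_⟩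
  rw [Sigma.Lex.le_def]
  constructor
  · rintro (h | ⟨h, -⟩) <;> exact h.le
  · intro h
    rcases h.lt_or_eq with h | rfl
    · exact Or.inl h
    · exact Or.inr ⟨rfl, le_rfl⟩

theorem strictMono_toLex_sigmaMk {α : P → Type*} [∀ p, Preorder (α p)] (p : P) :
    StrictMono fun a : α p => (toLex ⟨p, a⟩ : Σₗ p, α p) :=
  fun a b h => Sigma.Lex.right a b h

theorem ProperColoring.injective_comp_strictMono {c : Q → ℕ} (hc : ProperColoring c)
    {ι : Type*} [LinearOrder ι] {g : ι → Q} (hg : StrictMono g) : Injective (c ∘ g) := by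
  intro i j h
  by_contra hne
  exact hc _ _ (hg.injective.ne hne) ((le_total i j).imp (hg.monotone ·) (hg.monotone ·)) h

theorem IsCopy.injective_comp {f : P → Q} (hf : IsCopy f) {c : Q → ℕ} (hc : ProperColoring c)
    (hinc : ∀ p q, IncompRel (· ≤ ·) p q → c (f p) ≠ c (f q)) : Injective (c ∘ f) := by
  intro p q h
  by_contra hne
  by_cases hpq : p ≤ q ∨ q ≤ p
  · exact hc _ _ (hf.1.ne hne) (hpq.imp (hf.2 p q).2 (hf.2 q p).2) h
  · exact hinc p q (not_or.mp hpq) h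

end Copies

section ChainSum

variable {P : Type} [PartialOrder P] [Fintype P] {W : Type*} [LinearOrder W]

open Classical in
noncomputable def chainLength (rank : P → W) (p : P) : ℕ :=
  1 + #{q | rank q < rank p ∧ IncompRel (· ≤ ·) q p}

abbrev ChainSum (rank : P → W) : Type :=
  Σₗ p : P, Fin (chainLength rank p)

variable {rank : P → W}

theorem card_chainSum (hrank : Injective rank) :
    Fintype.card (ChainSum rank) = Fintype.card P +
      Nat.card {s : Finset P // s.card = 2 ∧ ∀ x ∈ s, ∀ y ∈ s, x ≠ y → ¬x ≤ y} := by
  classical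
  rw [Nat.card_eq_fintype_card, Fintype.card_subtype,
    card_pairs_eq_sum_card_rank_lt hrank (fun x y => ¬x ≤ y)]
  simp only [Fintype.card_lex, Fintype.card_sigma, Fintype.card_fin]
  simp only [chainLength, sum_add_distrib, sum_const, card_univ, smul_eq_mul, mul_one]
  rfl

theorem rainbowForces_chainSum (hrank : Injective rank) : RainbowForces (ChainSum rank) P := by
  classical
  intro c hc
  let L (p : P) : Finset ℕ := univ.image (c ∘ fun i : Fin (chainLength rank p) => toLex ⟨p, i⟩)
  have hL (p : P) : #{q | rank q < rank p ∧ IncompRel (· ≤ ·) q p} < #(L p) := by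
    rw [card_image_of_injective _ (hc.injective_comp_strictMono (strictMono_toLex_sigmaMk p)),
      card_univ, Fintype.card_fin, chainLength]
    omega
  obtain ⟨g, hgL, hg⟩ := exists_listColoring_of_card_lt hrank _ L hL
  choose s hs using fun p => mem_image.mp (hgL p)
  have hcopy := isCopy_toLex_sigmaMk s
  refine ⟨_, hcopy, hcopy.injective_comp hc fun p q hpq hcol => ?_⟩
  have hgpq : g p = g q := (hs p).2.symm.trans (hcol.trans (hs q).2)
  rcases (hrank.ne fun h => hpq.1 h.le).lt_or_gt with h | h
  · exact hg p q h hpq hgpq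
  · exact hg q p h hpq.symm hgpq.symm

end ChainSum

/-- For every finite poset `P` on `k` elements there exists a finite poset `Q`
of cardinality `k +` (the number of unordered pairs of distinct incomparable elements of `P`)
that rainbow forces `P`. -/
theorem statement1 (P : Type) [PartialOrder P] [Fintype P] (k : ℕ)
    (hk : Fintype.card P = k) :
    ∃ Q : FinPoset,
      Fintype.card Q.carrier =
        k + Nat.card {s : Finset P // s.card = 2 ∧ ∀ x ∈ s, ∀ y ∈ s, x ≠ y → ¬x ≤ y} ∧
      RainbowForces Q.carrier P := by
  have hrank := (Fintype.equivFin P).injective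
  exact ⟨⟨ChainSum (Fintype.equivFin P)⟩, hk ▸ card_chainSum hrank, rainbowForces_chainSum hrank⟩
end

section
/- Let P be a nonempty finite poset on k elements and let m(P) be the least natural number m such that there exists a partial order on Fin m that rainbow forces P. Then m(P) ≥ k, and m(P) = k if and only if P is a linear order. -/
/-!
Colouring `Q` injectively shows that a copy of `P` exists, so `|P| ≤ |Q|`. If `|Q| = |P|`, every
copy of `P` in `Q` is a bijection, so `Q` can rainbow force `P` only if every proper colouring of
`Q` is injective; giving two incomparable elements of `Q` the same colour is still proper, hence
`Q`, and with it `P`, must be a chain. Conversely a chain `P` is rainbow forced by the chain on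
`|P|` elements, whose proper colourings are all injective.
-/

open Function

section

variable {P Q : Type*} [PartialOrder P] [PartialOrder Q]

theorem ProperColoring.of_injective {c : Q → ℕ} (hc : Injective c) : ProperColoring c :=
  fun _ _ hne _ h => hne (hc h)

theorem ProperColoring.injective_of_total {c : Q → ℕ} (hc : ProperColoring c)
    (htot : ∀ a b : Q, a ≤ b ∨ b ≤ a) : Injective c := by
  intro a b hab
  by_contra hne
  exact hc a b hne (htot a b) hab

theorem properColoring_update_of_incomparable [DecidableEq Q] {c : Q → ℕ} (hc : Injective c)
    {a b : Q} (hab : ¬a ≤ b) (hba : ¬b ≤ a) : ProperColoring (update c b (c a)) := by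
  intro q q' hne hcomp
  simp only [update_apply]
  split_ifs with hq hq' hq'
  · exact absurd (hq.trans hq'.symm) hne
  · rintro h
    obtain rfl := hc h
    subst hq
    exact hcomp.elim hba hab
  · rintro h
    obtain rfl := hc h
    subst hq'
    exact hcomp.elim hab hba
  · exact hc.ne hne

theorem le_total_of_forall_properColoring_injective [Countable Q]
    (h : ∀ c : Q → ℕ, ProperColoring c → Injective c) (a b : Q) : a ≤ b ∨ b ≤ a := by
  classical
  by_contra! hab
  obtain ⟨c, hc⟩ := exists_injective_nat Q
  have hne : a ≠ b := by rintro rfl; exact hab.1 le_rfl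
  have hsame : update c b (c a) a = update c b (c a) b := by simp [hne]
  exact hne (h _ (properColoring_update_of_incomparable hc hab.1 hab.2) hsame)

theorem IsCopy.of_orderEmbedding (e : P ↪o Q) : IsCopy e :=
  ⟨e.injective, fun _ _ => e.le_iff_le⟩

theorem IsCopy.le_total {f : P → Q} (hf : IsCopy f) (htot : ∀ a b : Q, a ≤ b ∨ b ≤ a)
    (x y : P) : x ≤ y ∨ y ≤ x :=
  (htot (f x) (f y)).imp (hf.2 x y).1 (hf.2 y x).1

theorem RainbowForces.card_le [Fintype P] [Fintype Q] (hQ : RainbowForces Q P) :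
    Fintype.card P ≤ Fintype.card Q := by
  obtain ⟨c, hc⟩ := exists_injective_nat Q
  obtain ⟨f, hf, -⟩ := hQ c (.of_injective hc)
  exact Fintype.card_le_of_injective f hf.1

theorem RainbowForces.properColoring_injective_of_card_eq [Fintype P] [Fintype Q]
    (hQ : RainbowForces Q P) (hcard : Fintype.card P = Fintype.card Q) {c : Q → ℕ}
    (hc : ProperColoring c) : Injective c := by
  obtain ⟨f, hf, hrainbow⟩ := hQ c hc
  have hbij : Bijective f := (Fintype.bijective_iff_injective_and_card f).2 ⟨hf.1, hcard⟩
  exact hrainbow.of_comp_right hbij.2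

theorem RainbowForces.le_total_of_card_eq [Fintype P] [Fintype Q] (hQ : RainbowForces Q P)
    (hcard : Fintype.card P = Fintype.card Q) (x y : P) : x ≤ y ∨ y ≤ x := by
  obtain ⟨c, hc⟩ := exists_injective_nat Q
  obtain ⟨f, hf, -⟩ := hQ c (.of_injective hc)
  exact hf.le_total (le_total_of_forall_properColoring_injective
    fun _ => hQ.properColoring_injective_of_card_eq hcard) x y

end

theorem rainbowForces_of_orderEmbedding {P Q : Type*} [PartialOrder P] [LinearOrder Q]
    (e : P ↪o Q) : RainbowForces Q P := fun _ hc =>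
  ⟨e, IsCopy.of_orderEmbedding e, (hc.injective_of_total le_total).comp e.injective⟩

theorem statement2_general (P : Type) [PartialOrder P] [Fintype P] (k : ℕ)
    (hk : Fintype.card P = k) (mP : ℕ)
    (hm : IsLeast {m : ℕ |
      ∃ inst : PartialOrder (Fin m), @RainbowForces (Fin m) inst P inferInstance} mP) :
    k ≤ mP ∧ (mP = k ↔ ∀ x y : P, x ≤ y ∨ y ≤ x) := by
  obtain ⟨⟨inst, hQ⟩, hmin⟩ := hm
  have hle : k ≤ mP := by simpa [hk] using hQ.card_le
  refine ⟨hle, fun heq => hQ.le_total_of_card_eq (by simp [hk, heq]), fun hlin => ?_⟩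
  let _ : LinearOrder P :=
    { (inferInstance : PartialOrder P) with
      le_total := hlin
      toDecidableLE := Classical.decRel _ }
  have hchain : RainbowForces (Fin k) P :=
    rainbowForces_of_orderEmbedding (monoEquivOfFin P hk).symm.toOrderEmbedding
  exact le_antisymm (hmin ⟨inferInstance, hchain⟩) hle

/-- Let `P` be a nonempty finite poset on `k` elements and let `m(P)` be the
least `m` such that some partial order on `Fin m` rainbow forces `P`. Then `m(P) ≥ k`, and
`m(P) = k` if and only if `P` is a linear order. -/
theorem statement2 (P : Type) [PartialOrder P] [Fintype P] [Nonempty P] (k : ℕ)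
    (hk : Fintype.card P = k) (mP : ℕ)
    (hm : IsLeast {m : ℕ |
      ∃ inst : PartialOrder (Fin m), @RainbowForces (Fin m) inst P inferInstance} mP) :
    k ≤ mP ∧ (mP = k ↔ ∀ x y : P, x ≤ y ∨ y ≤ x) :=
  statement2_general P k hk mP hm
end

section
/- A finite poset Q minimally rainbow forces A_2 if and only if Q is order-isomorphic to O_2, the 3-element poset {u, v₁, v₂} with v₁ < v₂ and u incomparable to both v₁ and v₂. -/
/-- The antichain poset `A_k` on `k` elements: `Fin k` ordered by equality. -/
def AC (k : ℕ) := Fin k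

instance (k : ℕ) : PartialOrder (AC k) where
  le x y := x = y
  le_refl _ := rfl
  le_trans _ _ _ h h' := Eq.trans h h'
  le_antisymm _ _ h _ := h

instance (k : ℕ) : Fintype (AC k) := Fin.fintype k

/-- The order relation of `O₂`: `1 < 2` and `0` incomparable to both. -/
def O2rel (x y : Fin 3) : Prop := x.val = y.val ∨ (x.val = 1 ∧ y.val = 2)

instance : DecidableRel O2rel := fun x y => by unfold O2rel; infer_instance

/-- `O₂`: the 3-element poset `{u, v₁, v₂}` (`u = 0`, `v₁ = 1`, `v₂ = 2`) with `v₁ < v₂`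
and `u` incomparable to both. -/
def O2 := Fin 3

instance : DecidableEq O2 := instDecidableEqFin 3
instance : Fintype O2 := Fin.fintype 3

instance : PartialOrder O2 where
  le := O2rel
  le_refl _ := Or.inl rfl
  le_trans := by show ∀ a b c : Fin 3, O2rel a b → O2rel b c → O2rel a c; decide
  le_antisymm := by show ∀ a b : Fin 3, O2rel a b → O2rel b a → a = b; decide

/-! A copy of `A_2` is just an incomparable pair, so `Q` rainbow forces `A_2` exactly when every
proper coloring gives some incomparable pair two colors. If `Q` contains no copy of `O₂`, then
"equal or incomparable" is an equivalence relation, and giving each class its own color is a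
proper coloring under which every incomparable pair is monochromatic. If `Q` contains a copy
`u`, `v₁ < v₂` of `O₂`, then `v₁` and `v₂` get distinct colors, so one of them differs in color
from `u`. Hence the posets rainbow forcing `A_2` are those containing `O₂`, and the minimal ones
are the copies of `O₂`: a minimal one is covered by any copy of `O₂` inside it, and `O₂` minus a
point is too small to contain `O₂`. -/

open Function

section Copies

variable {P Q : Type*} [PartialOrder P] [PartialOrder Q] {f : P → Q}

theorem isCopy_iff_le_iff_le : IsCopy f ↔ ∀ p p', f p ≤ f p' ↔ p ≤ p' :=
  ⟨And.right, fun h => ⟨fun _ _ hpp' => le_antisymm ((h _ _).1 hpp'.le) ((h _ _).1 hpp'.ge), h⟩⟩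

theorem IsCopy.incompRel_iff (hf : IsCopy f) {p p' : P} :
    IncompRel (· ≤ ·) (f p) (f p') ↔ IncompRel (· ≤ ·) p p' := by
  simp only [IncompRel, hf.2]

noncomputable def IsCopy.orderEmbedding (hf : IsCopy f) : P ↪o Q :=
  OrderEmbedding.ofMapLEIff f hf.2

theorem IsCopy.subtype_mk {p : Q → Prop} (hf : IsCopy f) (hp : ∀ x, p (f x)) :
    IsCopy (fun x => (⟨f x, hp x⟩ : Subtype p)) :=
  isCopy_iff_le_iff_le.2 fun _ _ => hf.2 _ _

theorem OrderIso.isCopy (e : P ≃o Q) : IsCopy e :=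
  isCopy_iff_le_iff_le.2 fun _ _ => e.le_iff_le

theorem nonempty_orderIso_iff_minimal_copy [Finite Q] :
    Nonempty (Q ≃o P) ↔
      (∃ f : P → Q, IsCopy f) ∧ ∀ q : Q, ¬∃ f : P → {x // x ≠ q}, IsCopy f := by
  constructor
  · rintro ⟨e⟩
    refine ⟨⟨e.symm, e.symm.isCopy⟩, fun q ⟨f, hf⟩ => ?_⟩
    have hPQ : Nat.card P = Nat.card Q := Nat.card_congr e.symm.toEquiv
    have hPsub := Nat.card_le_card_of_injective f hf.1
    have hsubQ := Finite.card_subtype_lt (p := (· ≠ q)) (not_not.2 rfl)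
    omega
  · rintro ⟨⟨f, hf⟩, hmin⟩
    have hsurj : Surjective f := fun q => by
      by_contra! hq
      exact hmin q ⟨_, hf.subtype_mk hq⟩
    exact ⟨(OrderIso.ofSurjective hf.orderEmbedding hsurj).symm⟩

end Copies

section Antichain

variable {Q : Type*} [PartialOrder Q] {k : ℕ}

theorem AC.le_iff {p p' : AC k} : p ≤ p' ↔ p = p' := Iff.rfl

theorem AC.incompRel_iff {p p' : AC k} : IncompRel (· ≤ ·) p p' ↔ p ≠ p' := by
  simp [IncompRel, AC.le_iff, eq_comm]

theorem isCopy_ac2_of_incompRel {x y : Q} (h : IncompRel (· ≤ ·) x y) :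
    IsCopy (P := AC 2) ![x, y] := by
  refine isCopy_iff_le_iff_le.2 fun i j => ?_
  show _ ↔ @Eq (Fin 2) i j
  fin_cases i <;> fin_cases j <;> simp [h.1, h.2]

theorem exists_rainbow_ac2_iff {c : Q → ℕ} :
    (∃ f : AC 2 → Q, IsCopy f ∧ Injective (c ∘ f)) ↔
      ∃ x y, IncompRel (· ≤ ·) x y ∧ c x ≠ c y := by
  constructor
  · rintro ⟨f, hf, hc⟩
    have h01 : ((0 : Fin 2) : AC 2) ≠ (1 : Fin 2) := Fin.zero_ne_one
    exact ⟨_, _, hf.incompRel_iff.2 (AC.incompRel_iff.2 h01), hc.ne h01⟩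
  · rintro ⟨x, y, hxy, hc⟩
    refine ⟨_, isCopy_ac2_of_incompRel hxy, fun i j hij => ?_⟩
    show @Eq (Fin 2) i j
    fin_cases i <;> fin_cases j <;>
      first | rfl | exact absurd hij hc | exact absurd hij.symm hc

end Antichain

section O2

variable {Q : Type*} [PartialOrder Q]

def O2.u : O2 := (0 : Fin 3)
def O2.v₁ : O2 := (1 : Fin 3)
def O2.v₂ : O2 := (2 : Fin 3)

theorem O2.v₁_lt_v₂ : O2.v₁ < O2.v₂ := by
  show O2rel 1 2 ∧ ¬O2rel 2 1; decide

theorem O2.incompRel_u_v₁ : IncompRel (· ≤ ·) O2.u O2.v₁ := by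
  show ¬O2rel 0 1 ∧ ¬O2rel 1 0; decide

theorem O2.incompRel_u_v₂ : IncompRel (· ≤ ·) O2.u O2.v₂ := by
  show ¬O2rel 0 2 ∧ ¬O2rel 2 0; decide

theorem isCopy_o2_of_incompRel {a b u : Q} (hab : a < b) (hua : IncompRel (· ≤ ·) u a)
    (hub : IncompRel (· ≤ ·) u b) : IsCopy (P := O2) ![u, a, b] := by
  refine isCopy_iff_le_iff_le.2 fun i j => ?_
  show _ ↔ O2rel i j
  change Fin 3 at i j
  fin_cases i <;> fin_cases j <;> simp [O2rel, hab.le, hab.not_ge, hua.1, hua.2, hub.1, hub.2]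

theorem exists_isCopy_o2_iff :
    (∃ f : O2 → Q, IsCopy f) ↔
      ∃ a b u : Q, a < b ∧ IncompRel (· ≤ ·) u a ∧ IncompRel (· ≤ ·) u b := by
  constructor
  · rintro ⟨f, hf⟩
    exact ⟨_, _, _, hf.orderEmbedding.lt_iff_lt.2 O2.v₁_lt_v₂,
      hf.incompRel_iff.2 O2.incompRel_u_v₁, hf.incompRel_iff.2 O2.incompRel_u_v₂⟩
  · rintro ⟨a, b, u, hab, hua, hub⟩
    exact ⟨_, isCopy_o2_of_incompRel hab hua hub⟩

end O2

section Forcing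

variable {Q : Type*} [PartialOrder Q]

theorem eq_or_incompRel_trans
    (hQ : ∀ a b u : Q, a < b → IncompRel (· ≤ ·) u a → ¬IncompRel (· ≤ ·) u b) {x y z : Q}
    (hxy : x = y ∨ IncompRel (· ≤ ·) x y) (hyz : y = z ∨ IncompRel (· ≤ ·) y z) :
    x = z ∨ IncompRel (· ≤ ·) x z := by
  rcases hxy with rfl | hxy
  · exact hyz
  rcases hyz with rfl | hyz
  · exact Or.inr hxy
  by_contra! h
  have hcomp : x ≤ z ∨ z ≤ x := by simpa [IncompRel, imp_iff_not_or] using h.2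
  rcases hcomp with hle | hle
  · exact hQ x z y (hle.lt_of_ne h.1) hxy.symm hyz
  · exact hQ z x y (hle.lt_of_ne (Ne.symm h.1)) hyz hxy.symm

theorem exists_properColoring_of_forall_not_o2 [Countable Q]
    (hQ : ∀ a b u : Q, a < b → IncompRel (· ≤ ·) u a → ¬IncompRel (· ≤ ·) u b) :
    ∃ c : Q → ℕ, ProperColoring c ∧ ∀ x y, IncompRel (· ≤ ·) x y → c x = c y := by
  let s : Setoid Q :=
    { r := fun x y => x = y ∨ IncompRel (· ≤ ·) x y
      iseqv := ⟨fun _ => Or.inl rfl, fun h => h.imp Eq.symm IncompRel.symm,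
        eq_or_incompRel_trans hQ⟩ }
  obtain ⟨ι, hι⟩ := exists_injective_nat (Quotient s)
  refine ⟨fun x => ι (Quotient.mk s x), fun q q' hne hcomp hc => ?_,
    fun x y h => congrArg ι (Quotient.sound (Or.inr h))⟩
  rcases Quotient.exact (hι hc) with h | h
  exacts [hne h, hcomp.elim h.1 h.2]

theorem rainbowForces_ac2_iff [Countable Q] :
    RainbowForces Q (AC 2) ↔
      ∃ a b u : Q, a < b ∧ IncompRel (· ≤ ·) u a ∧ IncompRel (· ≤ ·) u b := by
  constructor
  · intro h
    by_contra! hQ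
    obtain ⟨c, hc, hmono⟩ := exists_properColoring_of_forall_not_o2 hQ
    obtain ⟨x, y, hxy, hne⟩ := exists_rainbow_ac2_iff.1 (h c hc)
    exact hne (hmono x y hxy)
  · rintro ⟨a, b, u, hab, hua, hub⟩ c hc
    refine exists_rainbow_ac2_iff.2 ?_
    by_cases h : c u = c a
    · exact ⟨u, b, hub, h ▸ hc a b hab.ne (Or.inl hab.le)⟩
    · exact ⟨u, a, hua, h⟩

theorem rainbowForces_ac2_iff_exists_isCopy_o2 [Countable Q] :
    RainbowForces Q (AC 2) ↔ ∃ f : O2 → Q, IsCopy f :=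
  rainbowForces_ac2_iff.trans exists_isCopy_o2_iff.symm

end Forcing

/-- A finite poset `Q` minimally rainbow forces `A_2` if and only if `Q` is
order-isomorphic to `O₂`. -/
theorem statement7 (Q : Type) [PartialOrder Q] [Fintype Q] :
    MinRainbowForces Q (AC 2) ↔ Nonempty (Q ≃o O2) := by
  simp only [MinRainbowForces, rainbowForces_ac2_iff_exists_isCopy_o2]
  exact nonempty_orderIso_iff_minimal_copy.symm
end

section
/- For every k ≥ 1, the poset O_k minimally rainbow forces the antichain A_k. -/
/-- `O_k`, the disjoint union of chains `C_1 + C_2 + ⋯ + C_k`: pairs `(i, a)` with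
`i : Fin k` and `a : Fin (i+1)`, where `(i, a) ≤ (j, b)` iff `i = j` and `a ≤ b`
(the disjoint-sum order on the sigma type). -/
abbrev OPoset (k : ℕ) := Σ i : Fin k, Fin (i.1 + 1)

/-! A proper coloring gives the `i + 1` elements of the chain `C_{i+1}` distinct colors, so the
color sets of the chains satisfy Hall's condition, and a system of distinct representatives is a
rainbow copy of `A_k`. Conversely, a copy of `A_k` meets every chain exactly once. After deleting
an element of `C_{i+1}`, color each chain by rank, closing the gap left by the deleted element:
the `i + 1` chains `C_1, …, C_{i+1}` then only carry the `i` colors `0, …, i - 1`. -/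

open Finset Function

theorem exists_injective_mem_of_lt_card {α : Type*} [DecidableEq α] {n : ℕ} (S : Fin n → Finset α)
    (hS : ∀ i : Fin n, (i : ℕ) < #(S i)) : ∃ r : Fin n → α, Injective r ∧ ∀ i, r i ∈ S i := by
  refine (all_card_le_biUnion_card_iff_exists_injective S).1 fun s => ?_
  rcases s.eq_empty_or_nonempty with rfl | hs
  · simp
  calc #s ≤ #(Iic (s.max' hs)) := card_le_card fun i hi => mem_Iic.2 (le_max' s i hi)
    _ = s.max' hs + 1 := Fin.card_Iic _
    _ ≤ #(S (s.max' hs)) := hS _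
    _ ≤ #(s.biUnion S) := card_le_card (subset_biUnion_of_mem S (max'_mem s hs))

theorem Sigma.le_total_of_fst_eq {ι : Type*} {α : ι → Type*} [∀ i, LinearOrder (α i)]
    {x y : Σ i, α i} (h : x.1 = y.1) : x ≤ y ∨ y ≤ x := by
  obtain ⟨i, a⟩ := x
  obtain ⟨j, b⟩ := y
  subst h
  simpa using le_total a b

theorem ProperColoring.of_strictMono {Q : Type*} [PartialOrder Q] {c : Q → ℕ} (hc : StrictMono c) :
    ProperColoring c := by
  rintro q q' hne (h | h)
  · exact (hc (h.lt_of_ne hne)).ne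
  · exact (hc (h.lt_of_ne hne.symm)).ne'

theorem IsCopy.injective_comp_of_comparable {Q ι : Type*} [PartialOrder Q] {k : ℕ} {f : AC k → Q}
    (hf : IsCopy f) (φ : Q → ι) (hφ : ∀ x y, φ x = φ y → x ≤ y ∨ y ≤ x) : Injective (φ ∘ f) := by
  intro p p' h
  rcases hφ _ _ h with h | h
  · exact (hf.2 p p').1 h
  · exact ((hf.2 p' p).1 h).symm

namespace OPoset

theorem rainbowForces (k : ℕ) : RainbowForces (OPoset k) (AC k) := by
  intro c hc
  have hchain : ∀ i : Fin k, Injective fun a : Fin (i + 1) => c ⟨i, a⟩ := fun i a b h => by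
    by_contra hab
    exact hc _ _ (by simpa using hab) (by simpa using le_total a b) h
  obtain ⟨r, hr, hrS⟩ := exists_injective_mem_of_lt_card (fun i => univ.image fun a => c ⟨i, a⟩)
    fun i => by simp [card_image_of_injective _ (hchain i)]
  choose x hx using fun i => by simpa using hrS i
  refine ⟨fun p => ⟨p, x p⟩, ⟨fun p p' h => congrArg Sigma.fst h, fun p p' => ?_⟩, ?_⟩
  · refine ⟨fun h => (Sigma.le_def.1 h).1, ?_⟩
    rintro rfl
    exact le_rfl
  · exact fun p p' h => hr ((hx p).symm.trans (h.trans (hx p')))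

variable {k : ℕ}

def skipRank (q : OPoset k) : OPoset k → ℕ
  | ⟨i, a⟩ => if i = q.1 ∧ q.2.val < a.val then a.val - 1 else a.val

theorem skipRank_strictMono (q : OPoset k) :
    StrictMono fun z : {x : OPoset k // x ≠ q} => skipRank q z := by
  rintro ⟨⟨i, a⟩, ha⟩ ⟨⟨j, b⟩, hb⟩ h
  obtain ⟨_, a, b, hab⟩ := (Subtype.coe_lt_coe.2 h : (⟨i, a⟩ : OPoset k) < ⟨j, b⟩)
  obtain ⟨l, c⟩ := q
  have hab : (a : ℕ) < b := hab
  rcases eq_or_ne i l with rfl | hil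
  · have hac : (a : ℕ) ≠ c := by simpa [Fin.val_eq_val] using ha
    have hbc : (b : ℕ) ≠ c := by simpa [Fin.val_eq_val] using hb
    simp only [skipRank, true_and]
    split_ifs <;> omega
  · simpa [skipRank, hil] using hab

theorem skipRank_lt {q z : OPoset k} (hz : z ≠ q) (hle : z.1 ≤ q.1) :
    skipRank q z < q.1 := by
  obtain ⟨i, a⟩ := z
  obtain ⟨l, c⟩ := q
  dsimp only at hle ⊢
  have ha : (a : ℕ) ≤ i := Fin.is_le a
  rcases eq_or_ne i l with rfl | hil
  · have hac : (a : ℕ) ≠ c := by simpa [Fin.val_eq_val] using hz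
    have hc : (c : ℕ) ≤ i := Fin.is_le c
    simp only [skipRank, true_and]
    split_ifs <;> omega
  · have hil' : (i : ℕ) < l := lt_of_le_of_ne hle (Fin.val_ne_of_ne hil)
    simp only [skipRank, hil, false_and, if_false]
    omega

theorem not_rainbowForces_erase (q : OPoset k) :
    ¬RainbowForces {x : OPoset k // x ≠ q} (AC k) := by
  intro hforces
  obtain ⟨f, hf, hrainbow⟩ :=
    hforces _ (ProperColoring.of_strictMono (skipRank_strictMono q))
  have hinj : Injective fun p : Fin k => (f p).1.1 :=
    hf.injective_comp_of_comparable (fun z => z.1.1) fun _ _ h => Sigma.le_total_of_fst_eq h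
  obtain ⟨s, hs⟩ := (Finite.injective_iff_surjective.1 hinj).hasRightInverse
  have hcard : #(Iic q.1) ≤ #(range q.1) :=
    card_le_card_of_injOn (fun j => skipRank q (f (s j)))
      (fun j hj => mem_range.2 (skipRank_lt (f (s j)).2 ((hs j).trans_le (mem_Iic.1 hj))))
      (hrainbow.comp hs.injective).injOn
  simp at hcard

end OPoset

theorem statement10_general (k : ℕ) :
    MinRainbowForces (OPoset k) (AC k) :=
  ⟨OPoset.rainbowForces k, OPoset.not_rainbowForces_erase⟩

/-- For every `k ≥ 1`, the poset `O_k` minimally rainbow forces the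
antichain `A_k`. -/
theorem statement10 (k : ℕ) (hk : 1 ≤ k) :
    MinRainbowForces (OPoset k) (AC k) :=
  statement10_general k
end

section
/- For every k ≥ 2 there exists n₀ such that for all n ≥ n₀, La_R*(n,A_k) = Σ(n,k−1) + 2. -/
/-- `La_R^*(n,P)`: the maximum size of a family of subsets of `[n]` admitting a proper
coloring with no rainbow copy of `P`. -/
noncomputable def LaR (n : ℕ) (P : Type*) [PartialOrder P] : ℕ :=
  sSup {m : ℕ | ∃ 𝓕 : Finset (Finset (Fin n)), 𝓕.card = m ∧ AvoidsRainbow n P 𝓕}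

/-- `Σ(n,k) = ∑_{i=1}^k C(n, ⌊(n-k)/2⌋ + i)`, the sum of the `k` largest binomial
coefficients of order `n`. -/
def SigmaL (n k : ℕ) : ℕ := ∑ i ∈ Finset.Icc 1 k, n.choose ((n - k) / 2 + i)


/-!
Lower bound: the levels `0`, `n` and the `k - 1` middle levels, colored by size, contain no
rainbow `A_k`, because an antichain of at least two sets avoids `∅` and `[n]` and so meets only
`k - 1` sizes.

Upper bound, for `n ≫ k³`, with `K = k - 1`: the color classes are antichains. Greedily pick a
rainbow antichain `S` of `K` middle sets (sizes in `[n/6, 5n/6]`). As no rainbow antichain has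
`K + 1` members, every member of `𝓕` is comparable to a set of `S` or shares its color. By
Erdős's theorem the color classes of `S` hold at most `Σ(n, K)` sets, so some `G₀ ∉ {∅, [n]}`
has a color outside `S`. A middle set has only `2 ^ (5n/6 + 1)` comparables, so each color class
of `S` holds almost `C(n, n/2)` sets, of which at most `C(n-1, (n-1)/2) + 2 ≤ 2/3 C(n, n/2) + 2`
are comparable to `G₀`. Hence `S` can be rebuilt, color by color, from sets incomparable to `G₀`,
and adding `G₀` yields a rainbow antichain with `K + 1` members.
-/

open Finset

namespace Nat

theorem choose_le_choose_of_le_half {n a b : ℕ} (hab : a ≤ b) (hb : b ≤ n / 2) :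
    n.choose a ≤ n.choose b := by
  induction b, hab using Nat.le_induction with
  | base => rfl
  | succ b _ ih => exact (ih (by omega)).trans (choose_le_succ_of_lt_half_left (by omega))

theorem choose_le_choose_of_le_of_le_sub {n a b : ℕ} (hab : a ≤ b) (hb : b ≤ n - a) :
    n.choose a ≤ n.choose b := by
  rcases le_or_gt b (n / 2) with h | h
  · exact choose_le_choose_of_le_half hab h
  · rw [← choose_symm (by omega : b ≤ n)]
    exact choose_le_choose_of_le_half (by omega) (by omega)

theorem two_mul_choose_le_choose_succ {n r : ℕ} (h : 3 * r + 2 ≤ n) :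
    2 * n.choose r ≤ n.choose (r + 1) := by
  refine Nat.le_of_mul_le_mul_right ?_ (succ_pos r)
  rw [choose_succ_right_eq]
  calc 2 * n.choose r * (r + 1) = n.choose r * (2 * (r + 1)) := by ring
    _ ≤ n.choose r * (n - r) := Nat.mul_le_mul_left _ (by omega)

theorem two_pow_mul_choose_le {n s t : ℕ} (hst : s ≤ t) (ht : 3 * t ≤ n) :
    2 ^ (t - s) * n.choose s ≤ n.choose t := by
  induction t, hst using Nat.le_induction with
  | base => simp
  | succ t hst ih =>
    rw [Nat.sub_add_comm hst, pow_succ, mul_right_comm, mul_comm _ 2]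
    exact (Nat.mul_le_mul_left 2 (ih (by omega))).trans (two_mul_choose_le_choose_succ (by omega))

theorem two_pow_le_succ_mul_choose_half (n : ℕ) : 2 ^ n ≤ (n + 1) * n.choose (n / 2) := by
  rw [← sum_range_choose]
  simpa using sum_le_card_nsmul (range (n + 1)) _ _ fun i _ => choose_le_middle i n

theorem sub_mul_choose_succ_sub_choose {n r : ℕ} (hr : r < n / 2) :
    (n - r) * (n.choose (r + 1) - n.choose r) = (n - 2 * r - 1) * n.choose (r + 1) := by
  have h : (n - r) * n.choose r = (r + 1) * n.choose (r + 1) := by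
    rw [mul_comm, ← choose_succ_right_eq, mul_comm]
  rw [Nat.mul_sub, h, ← Nat.sub_mul]
  congr 1
  omega

theorem mul_choose_half_sub_le {n j : ℕ} (hj : j ≤ n / 2) :
    n * (n.choose (n / 2) - n.choose (n / 2 - j)) ≤ 4 * j ^ 2 * n.choose (n / 2) := by
  induction j with
  | zero => simp
  | succ j ih =>
    set r := n / 2 - (j + 1)
    have hr : r + 1 = n / 2 - j := by omega
    have hle : n.choose r ≤ n.choose (r + 1) := choose_le_succ_of_lt_half_left (by omega)
    have hmid : n.choose (r + 1) ≤ n.choose (n / 2) := choose_le_middle _ _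
    have hstep : n * (n.choose (r + 1) - n.choose r) ≤ 4 * (j + 1) * n.choose (n / 2) :=
      calc n * (n.choose (r + 1) - n.choose r)
          ≤ 2 * ((n - r) * (n.choose (r + 1) - n.choose r)) := by
            rw [← mul_assoc]; exact Nat.mul_le_mul_right _ (by omega)
        _ = 2 * ((n - 2 * r - 1) * n.choose (r + 1)) := by
            rw [sub_mul_choose_succ_sub_choose (by omega)]
        _ ≤ 2 * ((2 * (j + 1)) * n.choose (n / 2)) := by gcongr; omega
        _ = 4 * (j + 1) * n.choose (n / 2) := by ring
    rw [← hr] at ih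
    have ih := ih (by omega)
    calc n * (n.choose (n / 2) - n.choose r)
        = n * (n.choose (n / 2) - n.choose (r + 1)) + n * (n.choose (r + 1) - n.choose r) := by
          rw [← Nat.mul_add]; congr 1; omega
      _ ≤ 4 * j ^ 2 * n.choose (n / 2) + 4 * (j + 1) * n.choose (n / 2) := add_le_add ih hstep
      _ ≤ 4 * (j + 1) ^ 2 * n.choose (n / 2) := by nlinarith

end Nat

def maxChoose (t : ℕ) : ℕ := t.choose (t / 2)

theorem maxChoose_two_mul (a : ℕ) : maxChoose (2 * a) = (2 * a).choose a := by
  rw [maxChoose, Nat.mul_div_cancel_left a two_pos]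

theorem maxChoose_two_mul_add_one (a : ℕ) : maxChoose (2 * a + 1) = (2 * a + 1).choose a := by
  rw [maxChoose, show (2 * a + 1) / 2 = a by omega]

theorem maxChoose_mono : Monotone maxChoose :=
  monotone_nat_of_le_succ fun t =>
    (Nat.choose_le_succ t (t / 2)).trans (Nat.choose_le_middle _ _)

theorem two_mul_maxChoose_le (t : ℕ) : 2 * maxChoose t ≤ maxChoose (t + 2) := by
  have h₁ : (t + 2).choose (t / 2 + 1) = (t + 1).choose (t / 2) + (t + 1).choose (t / 2 + 1) :=
    Nat.choose_succ_succ' (t + 1) (t / 2)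
  have h₂ := Nat.choose_succ_succ' t (t / 2)
  have h₃ : t.choose (t / 2) ≤ (t + 1).choose (t / 2) := Nat.choose_le_succ _ _
  rw [maxChoose, maxChoose, show (t + 2) / 2 = t / 2 + 1 by omega]
  omega

theorem three_mul_maxChoose_le {t : ℕ} (ht : 1 ≤ t) : 3 * maxChoose t ≤ 2 * maxChoose (t + 1) := by
  obtain ⟨a, rfl | rfl⟩ := Nat.even_or_odd' t
  · have key := Nat.add_one_mul_choose_eq (2 * a) a
    rw [Nat.choose_symm_half] at key
    rw [maxChoose_two_mul, maxChoose_two_mul_add_one]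
    refine Nat.le_of_mul_le_mul_left ?_ (by omega : 0 < 2 * a + 1)
    calc (2 * a + 1) * (3 * (2 * a).choose a) = 3 * (a + 1) * (2 * a + 1).choose a := by
          rw [mul_left_comm, key]; ring
      _ ≤ 2 * (2 * a + 1) * (2 * a + 1).choose a := Nat.mul_le_mul_right _ (by omega)
      _ = (2 * a + 1) * (2 * (2 * a + 1).choose a) := by ring
  · have h : (2 * (a + 1)).choose (a + 1) = (2 * a + 1).choose a + (2 * a + 1).choose (a + 1) :=
      Nat.choose_succ_succ' (2 * a + 1) a
    rw [Nat.choose_symm_half] at h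
    rw [maxChoose_two_mul_add_one, show 2 * a + 1 + 1 = 2 * (a + 1) by ring, maxChoose_two_mul]
    omega

theorem maxChoose_add_maxChoose_sub_le {n m : ℕ} (hm : 1 ≤ m) (hmn : m < n) :
    maxChoose m + maxChoose (n - m) ≤ maxChoose (n - 1) + 2 := by
  have hsmall : ∀ t, t ≤ 2 → maxChoose t ≤ 2 := by decide
  rcases le_or_gt m 2 with h | h
  · linarith [hsmall m h, maxChoose_mono (show n - m ≤ n - 1 by omega)]
  rcases le_or_gt (n - m) 2 with h' | h'
  · linarith [hsmall _ h', maxChoose_mono (show m ≤ n - 1 by omega)]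
  have h₁ := maxChoose_mono (show m ≤ n - 3 by omega)
  have h₂ := maxChoose_mono (show n - m ≤ n - 3 by omega)
  have h₃ := two_mul_maxChoose_le (n - 3)
  rw [show n - 3 + 2 = n - 1 by omega] at h₃
  omega

section Sperner

variable {α : Type*} [DecidableEq α] {𝒜 : Finset (Finset α)}

theorem IsAntichain.card_le_maxChoose_of_forall_subset
    (h𝒜 : IsAntichain (· ⊆ ·) (𝒜 : Set (Finset α))) {G : Finset α} (hG : ∀ F ∈ 𝒜, F ⊆ G) :
    #𝒜 ≤ maxChoose #G := by
  let ι : Finset α → Finset G := Finset.subtype (· ∈ G)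
  have hι : ∀ F ∈ 𝒜, (ι F).map (Function.Embedding.subtype _) = F :=
    fun F hF => subtype_map_of_mem (hG F hF)
  have hinj : Set.InjOn ι 𝒜 := fun F hF F' hF' h => by rw [← hι F hF, ← hι F' hF', h]
  have hanti : IsAntichain (· ⊆ ·) ((𝒜.image ι : Finset (Finset G)) : Set (Finset G)) := by
    simp only [coe_image]
    rintro _ ⟨F, hF, rfl⟩ _ ⟨F', hF', rfl⟩ hne hsub
    refine h𝒜 hF hF' (fun h => hne (h ▸ rfl)) ?_
    rw [← hι F hF, ← hι F' hF']
    exact map_subset_map.mpr hsub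
  rw [← card_image_of_injOn hinj]
  simpa [maxChoose] using hanti.sperner

variable [Fintype α]

theorem IsAntichain.card_le_maxChoose_of_forall_superset
    (h𝒜 : IsAntichain (· ⊆ ·) (𝒜 : Set (Finset α))) {G : Finset α} (hG : ∀ F ∈ 𝒜, G ⊆ F) :
    #𝒜 ≤ maxChoose (Fintype.card α - #G) := by
  have hanti : IsAntichain (· ⊆ ·) ((𝒜.image compl : Finset (Finset α)) : Set (Finset α)) := by
    simp only [coe_image]
    rintro _ ⟨F, hF, rfl⟩ _ ⟨F', hF', rfl⟩ hne hsub
    exact h𝒜 hF' hF (fun h => hne (h ▸ rfl)) (compl_subset_compl.mp hsub)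
  have h := hanti.card_le_maxChoose_of_forall_subset (G := Gᶜ) (by
    simp only [mem_image]
    rintro _ ⟨F, hF, rfl⟩
    exact compl_subset_compl.mpr (hG F hF))
  rwa [card_image_of_injective _ compl_injective, card_compl] at h

theorem IsAntichain.card_filter_comparable_le
    (h𝒜 : IsAntichain (· ⊆ ·) (𝒜 : Set (Finset α))) {G : Finset α} (hG : 0 < #G)
    (hG' : #G < Fintype.card α) :
    #{F ∈ 𝒜 | F ⊆ G ∨ G ⊆ F} ≤ maxChoose (Fintype.card α - 1) + 2 := by
  rw [filter_or]
  calc #({F ∈ 𝒜 | F ⊆ G} ∪ {F ∈ 𝒜 | G ⊆ F})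
      ≤ #{F ∈ 𝒜 | F ⊆ G} + #{F ∈ 𝒜 | G ⊆ F} := card_union_le _ _
    _ ≤ maxChoose #G + maxChoose (Fintype.card α - #G) :=
        add_le_add
          ((h𝒜.subset (filter_subset _ _)).card_le_maxChoose_of_forall_subset
            fun F hF => (mem_filter.mp hF).2)
          ((h𝒜.subset (filter_subset _ _)).card_le_maxChoose_of_forall_superset
            fun F hF => (mem_filter.mp hF).2)
    _ ≤ maxChoose (Fintype.card α - 1) + 2 := maxChoose_add_maxChoose_sub_le hG hG'

end Sperner

section Comparables

variable {α : Type*} [Fintype α] [DecidableEq α]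

def comparables (G : Finset α) : Finset (Finset α) := {F | F ⊆ G ∨ G ⊆ F}

theorem card_comparables_le (G : Finset α) :
    #(comparables G) ≤ 2 ^ #G + 2 ^ (Fintype.card α - #G) := by
  have hsub : comparables G ⊆ G.powerset ∪ Gᶜ.powerset.image (G ∪ ·) := by
    intro F hF
    simp only [comparables, mem_filter, mem_univ, true_and] at hF
    rcases hF with hF | hF
    · exact mem_union_left _ (mem_powerset.mpr hF)
    · refine mem_union_right _ (mem_image.mpr ⟨F \ G, ?_, union_sdiff_of_subset hF⟩)
      exact mem_powerset.mpr fun x hx => mem_compl.mpr (mem_sdiff.mp hx).2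
  calc #(comparables G) ≤ #G.powerset + #(Gᶜ.powerset.image (G ∪ ·)) :=
        (card_le_card hsub).trans (card_union_le _ _)
    _ ≤ 2 ^ #G + 2 ^ (Fintype.card α - #G) := by
        rw [card_powerset]
        exact add_le_add le_rfl (card_image_le.trans (by rw [card_powerset, card_compl]))

end Comparables

section Middle

variable {n : ℕ}

/-- The greedy arguments only pick middle sets: each is comparable to exponentially few sets. -/
def IsMiddle (n : ℕ) (F : Finset (Fin n)) : Prop := n ≤ 6 * #F ∧ 6 * #F ≤ 5 * n

instance : DecidablePred (IsMiddle n) := fun _ => by unfold IsMiddle; infer_instance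

def nonMiddle (n : ℕ) : Finset (Finset (Fin n)) := {F | ¬IsMiddle n F}

theorem card_comparables_le_of_isMiddle {G : Finset (Fin n)} (hG : IsMiddle n G) :
    #(comparables G) ≤ 2 ^ (5 * n / 6 + 1) := by
  have h := card_comparables_le G
  rw [Fintype.card_fin] at h
  unfold IsMiddle at hG
  have h₁ : 2 ^ #G ≤ 2 ^ (5 * n / 6) := Nat.pow_le_pow_right two_pos (by omega)
  have h₂ : 2 ^ (n - #G) ≤ 2 ^ (5 * n / 6) := Nat.pow_le_pow_right two_pos (by omega)
  rw [pow_succ]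
  omega

theorem choose_le_choose_div_six_of_not_isMiddle {F : Finset (Fin n)} (hF : ¬IsMiddle n F) :
    n.choose #F ≤ n.choose (n / 6) := by
  have hFn : #F ≤ n := by simpa using F.card_le_univ
  unfold IsMiddle at hF
  rcases Nat.lt_or_ge (6 * #F) n with h | h
  · exact Nat.choose_le_choose_of_le_of_le_sub (by omega) (by omega)
  · rw [← Nat.choose_symm hFn]
    exact Nat.choose_le_choose_of_le_of_le_sub (by omega) (by omega)

theorem two_pow_mul_card_not_isMiddle_le :
    2 ^ (n / 6) * #(nonMiddle n) ≤ (n + 1) * n.choose (n / 2) := by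
  set N := nonMiddle n
  have hslice : ∀ l, #(N # l) ≤ n.choose (n / 6) := by
    intro l
    obtain h | ⟨F, hF⟩ := (N # l).eq_empty_or_nonempty
    · simp [h]
    obtain ⟨hFN, rfl⟩ := mem_slice.mp hF
    calc #(N # #F) ≤ (Fintype.card (Fin n)).choose #F := Set.Sized.card_le sized_slice
      _ ≤ n.choose (n / 6) := by
          rw [Fintype.card_fin]
          exact choose_le_choose_div_six_of_not_isMiddle (mem_filter.mp hFN).2
  have hN : #N ≤ (n + 1) * n.choose (n / 6) := by
    rw [← sum_card_slice, Fintype.card_fin]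
    simpa using sum_le_card_nsmul (Iic n) _ _ fun l _ => hslice l
  have hdouble : 2 ^ (n / 6) * n.choose (n / 6) ≤ n.choose (n / 2) := by
    have h := Nat.two_pow_mul_choose_le (n := n) (le_add_right le_rfl : n / 6 ≤ n / 6 + n / 6)
      (by omega)
    rw [Nat.add_sub_cancel] at h
    exact h.trans (Nat.choose_le_middle _ _)
  calc 2 ^ (n / 6) * #N ≤ 2 ^ (n / 6) * ((n + 1) * n.choose (n / 6)) := Nat.mul_le_mul_left _ hN
    _ = (n + 1) * (2 ^ (n / 6) * n.choose (n / 6)) := by ring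
    _ ≤ (n + 1) * n.choose (n / 2) := Nat.mul_le_mul_left _ hdouble

theorem mul_succ_le_two_pow_div_six {k : ℕ} (hn : 20000 * k ≤ n) :
    128 * k * (n + 1) ≤ 2 ^ (n / 6) := by
  set q := n / 12
  have hq : q + 1 ≤ 2 ^ q := Nat.lt_two_pow_self
  calc 128 * k * (n + 1) ≤ 128 * k * (12 * (q + 1)) := Nat.mul_le_mul_left _ (by omega)
    _ = (1536 * k) * (q + 1) := by ring
    _ ≤ (q + 1) * (q + 1) := Nat.mul_le_mul_right _ (by omega)
    _ ≤ 2 ^ q * 2 ^ q := Nat.mul_le_mul hq hq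
    _ = 2 ^ (2 * q) := by ring
    _ ≤ 2 ^ (n / 6) := Nat.pow_le_pow_right two_pos (by omega)

theorem card_not_isMiddle_add_le {k : ℕ} (hk : 1 ≤ k) (hn : 20000 * k ≤ n) :
    32 * (#(nonMiddle n) + k * 2 ^ (5 * n / 6 + 1) + 1)
      ≤ n.choose (n / 2) := by
  set M := #(nonMiddle n)
  set C := n.choose (n / 2)
  set E := 2 ^ (n / 6)
  have hM : E * M ≤ (n + 1) * C := two_pow_mul_card_not_isMiddle_le
  have hexp : 128 * k * (n + 1) ≤ E := mul_succ_le_two_pow_div_six hn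
  have hpow : 2 ^ n ≤ (n + 1) * C := Nat.two_pow_le_succ_mul_choose_half n
  have hE : E * 2 ^ (5 * n / 6) ≤ 2 ^ n := by
    rw [← pow_add]; exact Nat.pow_le_pow_right two_pos (by omega)
  have hE' : E ≤ 2 ^ n := Nat.pow_le_pow_right two_pos (by omega)
  refine Nat.le_of_mul_le_mul_left ?_ (by positivity : 0 < E)
  calc E * (32 * (M + k * 2 ^ (5 * n / 6 + 1) + 1))
      = 32 * (E * M) + 64 * k * (E * 2 ^ (5 * n / 6)) + 32 * E := by ring
    _ ≤ 32 * ((n + 1) * C) + 64 * k * ((n + 1) * C) + 32 * ((n + 1) * C) := by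
        have := hE.trans hpow
        have := hE'.trans hpow
        gcongr
    _ ≤ 128 * k * (n + 1) * C := by nlinarith
    _ ≤ E * C := Nat.mul_le_mul_right _ hexp

end Middle

def middleLevels (n K : ℕ) : Finset ℕ := Icc ((n - K) / 2 + 1) ((n - K) / 2 + K)

theorem sigmaL_eq_sum_middleLevels (n K : ℕ) :
    SigmaL n K = ∑ l ∈ middleLevels n K, n.choose l := by
  rw [SigmaL, middleLevels, ← map_add_left_Icc, sum_map]
  rfl

theorem card_middleLevels (n K : ℕ) : #(middleLevels n K) = K := by
  simp [middleLevels]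

theorem choose_le_choose_of_mem_middleLevels {n m t : ℕ} (hm : m ≤ n)
    (ht : t ∈ middleLevels n m) : n.choose ((n - m) / 2) ≤ n.choose t := by
  rw [middleLevels, mem_Icc] at ht
  exact Nat.choose_le_choose_of_le_of_le_sub (by omega) (by omega)

theorem choose_le_choose_of_notMem_middleLevels {n m l : ℕ} (hl : l ≤ n)
    (hlm : l ∉ middleLevels n m) : n.choose l ≤ n.choose ((n - m) / 2) := by
  rw [middleLevels, mem_Icc] at hlm
  rcases le_or_gt l ((n - m) / 2) with h | h
  · exact Nat.choose_le_choose_of_le_of_le_sub h (by omega)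
  · rw [← Nat.choose_symm hl]
    exact Nat.choose_le_choose_of_le_of_le_sub (by omega) (by omega)

theorem mul_choose_le_sigmaL {n K : ℕ} (hK : K ≤ n) : K * n.choose (n / 2 - K) ≤ SigmaL n K := by
  have h := card_nsmul_le_sum (middleLevels n K) n.choose (n.choose (n / 2 - K)) fun l hl => by
    rw [middleLevels, mem_Icc] at hl
    exact Nat.choose_le_choose_of_le_of_le_sub (by omega) (by omega)
  rwa [card_middleLevels, smul_eq_mul, ← sigmaL_eq_sum_middleLevels] at h

theorem eight_mul_le_sigmaL {n K : ℕ} (hn : 32 * K ^ 3 ≤ n) :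
    8 * (K * n.choose (n / 2)) ≤ 8 * SigmaL n K + n.choose (n / 2) := by
  rcases Nat.eq_zero_or_pos K with rfl | hK
  · simp
  set C := n.choose (n / 2)
  set D := C - n.choose (n / 2 - K)
  have hK3 : K ≤ K ^ 3 := Nat.le_self_pow (by norm_num) K
  have hdef : n * D ≤ 4 * K ^ 2 * C := Nat.mul_choose_half_sub_le (by omega)
  have hD : 8 * K * D ≤ C := by
    refine Nat.le_of_mul_le_mul_left ?_ (by positivity : 0 < 4 * K ^ 2)
    calc 4 * K ^ 2 * (8 * K * D) = 32 * K ^ 3 * D := by ring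
      _ ≤ n * D := Nat.mul_le_mul_right _ hn
      _ ≤ 4 * K ^ 2 * C := hdef
  have hsig := mul_choose_le_sigmaL (n := n) (K := K) (by omega)
  have hmid : n.choose (n / 2 - K) ≤ C := Nat.choose_le_middle _ _
  have hsplit : K * C = K * n.choose (n / 2 - K) + K * D := by
    rw [← Nat.mul_add]; congr 1; omega
  nlinarith

/-- Fractional knapsack: if the weights `a i / w i ∈ [0, 1]` have total mass at most `#T`, and `T`
carries the largest capacities `w`, then the total `∑ a` is at most the capacity of `T`. -/
theorem Finset.sum_le_sum_of_sum_div_le_card {ι 𝕜 : Type*} [DecidableEq ι] [Field 𝕜] [LinearOrder 𝕜]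
    [IsStrictOrderedRing 𝕜] {s T : Finset ι} (hT : T ⊆ s) {a w : ι → 𝕜} {c : 𝕜} (hc : 0 ≤ c)
    (ha : ∀ i ∈ s, 0 ≤ a i) (hw : ∀ i ∈ s, 0 < w i) (haw : ∀ i ∈ T, a i ≤ w i)
    (hout : ∀ i ∈ s \ T, w i ≤ c) (hin : ∀ i ∈ T, c ≤ w i)
    (hmass : ∑ i ∈ s, a i / w i ≤ #T) :
    ∑ i ∈ s, a i ≤ ∑ i ∈ T, w i := by
  have hpoint : ∀ i ∈ s, a i ≤ c * (a i / w i) + if i ∈ T then w i - c else 0 := by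
    intro i hi
    have hwi := hw i hi
    have hx : 0 ≤ a i / w i := div_nonneg (ha i hi) hwi.le
    have hai : a i = w i * (a i / w i) := by field_simp
    split_ifs with hiT
    · have hx1 : a i / w i ≤ 1 := (div_le_one hwi).mpr (haw i hiT)
      nlinarith [hin i hiT]
    · nlinarith [hout i (mem_sdiff.mpr ⟨hi, hiT⟩)]
  calc ∑ i ∈ s, a i ≤ ∑ i ∈ s, (c * (a i / w i) + if i ∈ T then w i - c else 0) :=
        sum_le_sum hpoint
    _ = c * ∑ i ∈ s, a i / w i + ∑ i ∈ T, (w i - c) := by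
        rw [sum_add_distrib, mul_sum, sum_ite_mem, inter_eq_right.mpr hT]
    _ ≤ c * #T + ∑ i ∈ T, (w i - c) := by gcongr
    _ = ∑ i ∈ T, w i := by rw [sum_sub_distrib, sum_const, nsmul_eq_mul]; ring

theorem sum_card_slice_biUnion_div_choose_le {ι α 𝕜 : Type*} [Fintype α] [DecidableEq α]
    [Field 𝕜] [LinearOrder 𝕜] [IsStrictOrderedRing 𝕜] (I : Finset ι) (𝒜 : ι → Finset (Finset α))
    (h𝒜 : ∀ i ∈ I, IsAntichain (· ⊆ ·) (𝒜 i : Set (Finset α))) :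
    ∑ r ∈ range (Fintype.card α + 1), (#((I.biUnion 𝒜) # r) : 𝕜) / (Fintype.card α).choose r
      ≤ #I := by
  classical
  calc ∑ r ∈ range (Fintype.card α + 1), (#((I.biUnion 𝒜) # r) : 𝕜) / (Fintype.card α).choose r
      ≤ ∑ r ∈ range (Fintype.card α + 1),
          ∑ i ∈ I, (#((𝒜 i) # r) : 𝕜) / (Fintype.card α).choose r := by
        gcongr with r
        rw [← sum_div,
          show (I.biUnion 𝒜) # r = I.biUnion fun i => (𝒜 i) # r from filter_biUnion _ _ _]
        gcongr
        exact_mod_cast card_biUnion_le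
    _ = ∑ i ∈ I, ∑ r ∈ range (Fintype.card α + 1), (#((𝒜 i) # r) : 𝕜) / (Fintype.card α).choose r :=
        sum_comm
    _ ≤ ∑ _i ∈ I, (1 : 𝕜) := sum_le_sum fun i hi => sum_card_slice_div_choose_le_one (h𝒜 i hi)
    _ = #I := by simp

/-- Erdős's theorem: LYM caps the total level density of the union at `#I`, and under that cap
the middle levels give the largest total. -/
theorem card_biUnion_le_sigmaL {ι : Type*} {n : ℕ} (I : Finset ι) (𝒜 : ι → Finset (Finset (Fin n)))
    (h𝒜 : ∀ i ∈ I, IsAntichain (· ⊆ ·) (𝒜 i : Set (Finset (Fin n)))) (hI : #I ≤ n) :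
    #(I.biUnion 𝒜) ≤ SigmaL n #I := by
  classical
  set B := I.biUnion 𝒜
  have hB : (#B : ℚ) = ∑ l ∈ range (n + 1), (#(B # l) : ℚ) := by
    rw [Nat.range_succ_eq_Iic, ← sum_card_slice, Fintype.card_fin]
    push_cast
    rfl
  have hmass := sum_card_slice_biUnion_div_choose_le (𝕜 := ℚ) I 𝒜 h𝒜
  rw [Fintype.card_fin, ← card_middleLevels n #I] at hmass
  have hknap := sum_le_sum_of_sum_div_le_card (s := range (n + 1)) (T := middleLevels n #I)
    (a := fun l => (#(B # l) : ℚ)) (w := fun l => (n.choose l : ℚ))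
    (c := n.choose ((n - #I) / 2))
    (fun l hl => by simp only [middleLevels, mem_Icc, mem_range] at hl ⊢; omega)
    (by positivity) (fun _ _ => by positivity)
    (fun l hl => by exact_mod_cast Nat.choose_pos (Nat.lt_succ_iff.mp (mem_range.mp hl)))
    (fun l _ => by exact_mod_cast (sized_slice (𝒜 := B)).card_le.trans_eq (by simp))
    (fun l hl => by
      obtain ⟨hl, hlI⟩ := mem_sdiff.mp hl
      exact_mod_cast choose_le_choose_of_notMem_middleLevels
        (Nat.lt_succ_iff.mp (mem_range.mp hl)) hlI)
    (fun l hl => by exact_mod_cast choose_le_choose_of_mem_middleLevels hI hl)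
    hmass
  rw [sigmaL_eq_sum_middleLevels]
  exact_mod_cast hB ▸ hknap

section Rainbow

variable {n : ℕ} {𝓕 S : Finset (Finset (Fin n))} {c : Finset (Fin n) → ℕ}

def IsRainbowAntichain (c : Finset (Fin n) → ℕ) (S : Finset (Finset (Fin n))) : Prop :=
  IsAntichain (· ⊆ ·) (S : Set (Finset (Fin n))) ∧ Set.InjOn c S

def colorClass (𝓕 : Finset (Finset (Fin n))) (c : Finset (Fin n) → ℕ) (γ : ℕ) :
    Finset (Finset (Fin n)) :=
  {F ∈ 𝓕 | c F = γ}

theorem isRainbowAntichain_empty : IsRainbowAntichain c ∅ := by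
  simp [IsRainbowAntichain]

theorem IsRainbowAntichain.insert {F : Finset (Fin n)} (hS : IsRainbowAntichain c S)
    (hF : ∀ s ∈ S, ¬F ⊆ s ∧ ¬s ⊆ F) (hcF : c F ∉ S.image c) :
    IsRainbowAntichain c (insert F S) := by
  have hFS : F ∉ S := fun h => (hF F h).1 subset_rfl
  rw [IsRainbowAntichain, coe_insert, Set.injOn_insert (mem_coe.not.mpr hFS)]
  refine ⟨hS.1.insert (fun s hs _ => (hF s hs).2) (fun s hs _ => (hF s hs).1), hS.2, ?_⟩
  simpa using hcF

/-- A rainbow antichain of size `k` is a rainbow copy of `A_k`. -/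
theorem card_lt_of_isRainbowAntichain {k : ℕ}
    (hno : ¬∃ f : AC k → Finset (Fin n), FamilyCopy n 𝓕 (AC k) f ∧ Function.Injective (c ∘ f))
    (hS𝓕 : S ⊆ 𝓕) (hS : IsRainbowAntichain c S) : #S < k := by
  by_contra! hk
  obtain ⟨T, hTS, hT⟩ := exists_subset_card_eq hk
  let e : Fin k ≃ T := (T.equivFinOfCardEq hT).symm
  have he : Function.Injective fun p => (e p : Finset (Fin n)) :=
    Subtype.val_injective.comp e.injective
  refine hno ⟨fun p => e p, ⟨fun p => hS𝓕 (hTS (e p).2), he, fun p p' => ⟨fun hsub => ?_, ?_⟩⟩,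
    fun p p' h => he (hS.2 (hTS (e p).2) (hTS (e p').2) h)⟩
  · by_contra hne
    exact hS.1 (hTS (e p).2) (hTS (e p').2) (he.ne hne) hsub
  · rintro rfl
    exact subset_rfl

theorem FamilyProperColoring.isAntichain_colorClass (hc : FamilyProperColoring n 𝓕 c) (γ : ℕ) :
    IsAntichain (· ⊆ ·) (colorClass 𝓕 c γ : Set (Finset (Fin n))) := by
  intro A hA B hB hAB hsub
  simp only [colorClass, coe_filter, Set.mem_ofPred_eq] at hA hB
  exact hc A hA.1 B hB.1 hAB hsub (hA.2.trans hB.2.symm)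

theorem FamilyProperColoring.card_colorClass_le (hc : FamilyProperColoring n 𝓕 c) (γ : ℕ) :
    #(colorClass 𝓕 c γ) ≤ n.choose (n / 2) := by
  simpa using (hc.isAntichain_colorClass γ).sperner

theorem exists_isMiddle_incomparable {𝓟 : Finset (Finset (Fin n))} (hS : ∀ s ∈ S, IsMiddle n s)
    (h : #(nonMiddle n) + #S * 2 ^ (5 * n / 6 + 1) < #𝓟) :
    ∃ F ∈ 𝓟, IsMiddle n F ∧ ∀ s ∈ S, ¬F ⊆ s ∧ ¬s ⊆ F := by
  have hbad : #(nonMiddle n ∪ S.biUnion comparables)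
      ≤ #(nonMiddle n) + #S * 2 ^ (5 * n / 6 + 1) :=
    (card_union_le _ _).trans (add_le_add le_rfl
      (card_biUnion_le_card_mul _ _ _ fun s hs => card_comparables_le_of_isMiddle (hS s hs)))
  obtain ⟨F, hF𝓟, hF⟩ := exists_mem_notMem_of_card_lt_card (hbad.trans_lt h)
  simp only [mem_union, mem_filter, mem_univ, true_and, not_or, not_not, mem_biUnion,
    not_exists, not_and, nonMiddle, comparables] at hF
  exact ⟨F, hF𝓟, hF.1, hF.2⟩

theorem FamilyProperColoring.exists_insert_isRainbowAntichain (hc : FamilyProperColoring n 𝓕 c)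
    (hS : IsRainbowAntichain c S) (hSmid : ∀ s ∈ S, IsMiddle n s)
    (h : #(nonMiddle n) + #S * (n.choose (n / 2) + 2 ^ (5 * n / 6 + 1))
      < #𝓕) :
    ∃ F ∈ 𝓕, IsMiddle n F ∧ F ∉ S ∧ IsRainbowAntichain c (insert F S) := by
  set 𝓒 := S.biUnion fun s => colorClass 𝓕 c (c s)
  have h𝓒 : #𝓒 ≤ #S * n.choose (n / 2) :=
    card_biUnion_le_card_mul _ _ _ fun s _ => hc.card_colorClass_le _
  obtain ⟨F, hF, hFmid, hFS⟩ := exists_isMiddle_incomparable (𝓟 := 𝓕 \ 𝓒) hSmid (by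
    have := card_le_card_sdiff_add_card (s := 𝓕) (t := 𝓒)
    nlinarith)
  obtain ⟨hF𝓕, hF𝓒⟩ := mem_sdiff.mp hF
  refine ⟨F, hF𝓕, hFmid, fun h => (hFS F h).1 subset_rfl, hS.insert hFS ?_⟩
  simp only [mem_image, not_exists, not_and]
  intro s hs hcs
  exact hF𝓒 (mem_biUnion.mpr ⟨s, hs, mem_filter.mpr ⟨hF𝓕, hcs.symm⟩⟩)

theorem FamilyProperColoring.exists_isRainbowAntichain (hc : FamilyProperColoring n 𝓕 c) (r : ℕ)
    (hr : #(nonMiddle n) + r * (n.choose (n / 2) + 2 ^ (5 * n / 6 + 1))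
      < #𝓕) :
    ∃ S ⊆ 𝓕, (∀ s ∈ S, IsMiddle n s) ∧ IsRainbowAntichain c S ∧ #S = r + 1 := by
  induction r with
  | zero =>
    obtain ⟨F, hF𝓕, hFmid, -, hF⟩ :=
      hc.exists_insert_isRainbowAntichain isRainbowAntichain_empty (by simp) (by simpa using hr)
    exact ⟨{F}, by simpa using hF𝓕, by simpa using hFmid, by simpa using hF, rfl⟩
  | succ r ih =>
    obtain ⟨S, hS𝓕, hSmid, hS, hSr⟩ := ih (lt_of_le_of_lt (by gcongr; omega) hr)
    obtain ⟨F, hF𝓕, hFmid, hFS, hF⟩ := hc.exists_insert_isRainbowAntichain hS hSmid (hSr ▸ hr)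
    refine ⟨insert F S, insert_subset hF𝓕 hS𝓕, ?_, hF, by rw [card_insert_of_notMem hFS, hSr]⟩
    simpa [hFmid] using hSmid

theorem subset_biUnion_comparables_union
    (hmax : ∀ T ⊆ 𝓕, IsRainbowAntichain c T → #T ≤ #S) (hS𝓕 : S ⊆ 𝓕)
    (hS : IsRainbowAntichain c S) :
    𝓕 ⊆ S.biUnion comparables ∪ S.biUnion fun s => colorClass 𝓕 c (c s) := by
  intro F hF
  by_contra hcon
  simp only [mem_union, mem_biUnion, comparables, colorClass, mem_filter, mem_univ, true_and,
    not_or, not_exists, not_and] at hcon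
  have hFS : F ∉ S := fun h => (hcon.1 F h).1 subset_rfl
  have hnew := hmax _ (insert_subset hF hS𝓕)
    (hS.insert hcon.1 (by simpa using fun s hs h => hcon.2 s hs hF h.symm))
  rw [card_insert_of_notMem hFS] at hnew
  omega

theorem FamilyProperColoring.card_le_card_colorClass_add (hc : FamilyProperColoring n 𝓕 c)
    (hcover : 𝓕 ⊆ S.biUnion comparables ∪ S.biUnion fun s => colorClass 𝓕 c (c s))
    (hSmid : ∀ s ∈ S, IsMiddle n s) {s : Finset (Fin n)} (hs : s ∈ S) :
    #𝓕 ≤ #S * 2 ^ (5 * n / 6 + 1) + (#(colorClass 𝓕 c (c s)) + (#S - 1) * n.choose (n / 2)) := by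
  have hcomp : #(S.biUnion comparables) ≤ #S * 2 ^ (5 * n / 6 + 1) :=
    card_biUnion_le_card_mul _ _ _ fun s hs => card_comparables_le_of_isMiddle (hSmid s hs)
  have hothers : #((S.erase s).biUnion fun s => colorClass 𝓕 c (c s))
      ≤ (#S - 1) * n.choose (n / 2) := by
    rw [← card_erase_of_mem hs]
    exact card_biUnion_le_card_mul _ _ _ fun _ _ => hc.card_colorClass_le _
  have hclasses : (S.biUnion fun s => colorClass 𝓕 c (c s))
      = colorClass 𝓕 c (c s) ∪ (S.erase s).biUnion fun s => colorClass 𝓕 c (c s) := by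
    conv_lhs => rw [← insert_erase hs, biUnion_insert]
  rw [hclasses] at hcover
  calc #𝓕 ≤ #(S.biUnion comparables) + #(colorClass 𝓕 c (c s)
        ∪ (S.erase s).biUnion fun s => colorClass 𝓕 c (c s)) :=
        (card_le_card hcover).trans (card_union_le _ _)
    _ ≤ _ := add_le_add hcomp ((card_union_le _ _).trans (add_le_add le_rfl hothers))

theorem FamilyProperColoring.exists_isRainbowAntichain_image_eq (hc : FamilyProperColoring n 𝓕 c)
    {G₀ : Finset (Fin n)} (hG₀ : 0 < #G₀) (hG₀' : #G₀ < n) (Γ : Finset ℕ)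
    (hΓ : ∀ γ ∈ Γ, #(nonMiddle n) + (maxChoose (n - 1) + 2)
      + (#Γ - 1) * 2 ^ (5 * n / 6 + 1) < #(colorClass 𝓕 c γ)) :
    ∃ S ⊆ 𝓕, (∀ s ∈ S, IsMiddle n s) ∧ IsRainbowAntichain c S ∧ S.image c = Γ ∧
      ∀ s ∈ S, ¬G₀ ⊆ s ∧ ¬s ⊆ G₀ := by
  induction Γ using Finset.induction_on with
  | empty => exact ⟨∅, empty_subset _, by simp, isRainbowAntichain_empty, by simp, by simp⟩
  | insert γ Γ hγ ih =>
    rw [card_insert_of_notMem hγ, Nat.add_sub_cancel] at hΓ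
    obtain ⟨S, hS𝓕, hSmid, hS, hSΓ, hSG₀⟩ := ih fun γ' hγ' =>
      lt_of_le_of_lt (by gcongr; omega) (hΓ γ' (mem_insert_of_mem hγ'))
    have hScard : #S = #Γ := by rw [← hSΓ, card_image_of_injOn hS.2]
    have hcomp := (hc.isAntichain_colorClass γ).card_filter_comparable_le hG₀ (by simpa using hG₀')
    rw [Fintype.card_fin] at hcomp
    have hsplit := card_filter_add_card_filter_not (s := colorClass 𝓕 c γ)
      (fun F => F ⊆ G₀ ∨ G₀ ⊆ F)
    obtain ⟨F, hF, hFmid, hFS⟩ := exists_isMiddle_incomparable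
      (𝓟 := {F ∈ colorClass 𝓕 c γ | ¬(F ⊆ G₀ ∨ G₀ ⊆ F)}) hSmid (by
        have := hΓ γ (mem_insert_self _ _)
        rw [hScard]
        omega)
    obtain ⟨hF𝓒, hFG₀⟩ := mem_filter.mp hF
    obtain ⟨hF𝓕, rfl⟩ := mem_filter.mp hF𝓒
    refine ⟨insert F S, insert_subset hF𝓕 hS𝓕, ?_, hS.insert hFS (by rwa [hSΓ]),
      by rw [image_insert, hSΓ], ?_⟩
    · simpa [hFmid] using hSmid
    · rw [forall_mem_insert]
      exact ⟨(not_or.mp hFG₀).symm, hSG₀⟩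

theorem FamilyProperColoring.exists_mem_color_notMem_image (hc : FamilyProperColoring n 𝓕 c)
    (hS : #S ≤ n) (h𝓕 : SigmaL n #S + 2 < #𝓕) :
    ∃ G ∈ 𝓕, 0 < #G ∧ #G < n ∧ c G ∉ S.image c := by
  have herdos := card_biUnion_le_sigmaL S (fun s => colorClass 𝓕 c (c s))
    (fun _ _ => hc.isAntichain_colorClass _) hS
  obtain ⟨G, hG, hGS⟩ := exists_mem_notMem_of_card_lt_card
    (s := S.biUnion fun s => colorClass 𝓕 c (c s)) (t := (𝓕.erase ∅).erase univ) (by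
      have h₁ := pred_card_le_card_erase (s := 𝓕) (a := ∅)
      have h₂ := pred_card_le_card_erase (s := 𝓕.erase ∅) (a := univ)
      omega)
  obtain ⟨hGuniv, hGempty, hG𝓕⟩ : G ≠ univ ∧ G ≠ ∅ ∧ G ∈ 𝓕 := by simpa using hG
  refine ⟨G, hG𝓕, card_pos.mpr (nonempty_iff_ne_empty.mpr hGempty),
    by simpa using (card_lt_iff_ne_univ _).mpr hGuniv, fun h => ?_⟩
  obtain ⟨s, hs, hcs⟩ := mem_image.mp h
  exact hGS (mem_biUnion.mpr ⟨s, hs, mem_filter.mpr ⟨hG𝓕, hcs.symm⟩⟩)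

theorem FamilyProperColoring.card_le_sigmaL_add_two (hc : FamilyProperColoring n 𝓕 c) {K : ℕ}
    (hK : 1 ≤ K) (hKn : K ≤ n) (hsmall : ∀ T ⊆ 𝓕, IsRainbowAntichain c T → #T ≤ K)
    (hsigma : 8 * (K * n.choose (n / 2)) ≤ 8 * SigmaL n K + n.choose (n / 2))
    (hfew : 32 * (#(nonMiddle n) + (K + 1) * 2 ^ (5 * n / 6 + 1) + 1) ≤ n.choose (n / 2))
    (hmax : 3 * maxChoose (n - 1) ≤ 2 * n.choose (n / 2)) :
    #𝓕 ≤ SigmaL n K + 2 := by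
  by_contra! hbig
  set C := n.choose (n / 2)
  set M := #(nonMiddle n)
  set P := 2 ^ (5 * n / 6 + 1)
  have hKC : (K - 1) * C + C = K * C := by nth_rw 2 [← Nat.sub_add_cancel hK]; ring
  have hKP : (K - 1) * P + P = K * P := by nth_rw 2 [← Nat.sub_add_cancel hK]; ring
  have hKP' : (K + 1) * P = K * P + P := by ring
  obtain ⟨S, hS𝓕, hSmid, hS, hSK⟩ := hc.exists_isRainbowAntichain (K - 1) (by
    show M + (K - 1) * (C + P) < #𝓕
    rw [Nat.mul_add]; linarith)
  rw [Nat.sub_add_cancel hK] at hSK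
  have hcover := subset_biUnion_comparables_union (fun T hT𝓕 hT => hSK ▸ hsmall T hT𝓕 hT) hS𝓕 hS
  obtain ⟨G₀, hG₀𝓕, hG₀, hG₀', hG₀c⟩ :=
    hc.exists_mem_color_notMem_image (hSK ▸ hKn) (hSK ▸ hbig)
  obtain ⟨S', hS'𝓕, -, hS', hS'c, hS'G₀⟩ :=
    hc.exists_isRainbowAntichain_image_eq hG₀ hG₀' (S.image c) (by
      rw [card_image_of_injOn hS.2, hSK]
      intro γ hγ
      obtain ⟨s, hs, rfl⟩ := mem_image.mp hγ
      have hclass : #𝓕 ≤ K * P + (#(colorClass 𝓕 c (c s)) + (K - 1) * C) :=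
        hSK ▸ hc.card_le_card_colorClass_add hcover hSmid hs
      show M + (maxChoose (n - 1) + 2) + (K - 1) * P < _
      linarith)
  have hG₀S' : G₀ ∉ S' := fun h => (hS'G₀ G₀ h).1 subset_rfl
  have h := hsmall _ (insert_subset hG₀𝓕 hS'𝓕) (hS'.insert hS'G₀ (hS'c ▸ hG₀c))
  rw [card_insert_of_notMem hG₀S', ← card_image_of_injOn hS'.2, hS'c, card_image_of_injOn hS.2,
    hSK] at h
  omega

end Rainbow

theorem card_le_sigmaL_add_two_of_avoidsRainbow {n k : ℕ} {𝓕 : Finset (Finset (Fin n))}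
    (hk : 2 ≤ k) (hn : 20000 * k ^ 3 ≤ n) (h𝓕 : AvoidsRainbow n (AC k) 𝓕) :
    #𝓕 ≤ SigmaL n (k - 1) + 2 := by
  obtain ⟨c, hc, hno⟩ := h𝓕
  have hk3 : k ≤ k ^ 3 := Nat.le_self_pow (by norm_num) k
  have hmax := three_mul_maxChoose_le (t := n - 1) (by omega)
  rw [Nat.sub_add_cancel (by omega)] at hmax
  refine hc.card_le_sigmaL_add_two (by omega) (by omega)
    (fun T hT𝓕 hT => Nat.le_sub_one_of_lt (card_lt_of_isRainbowAntichain hno hT𝓕 hT))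
    (eight_mul_le_sigmaL (by nlinarith [pow_le_pow_left₀ (Nat.zero_le _) (Nat.sub_le k 1) 3]))
    ?_ hmax
  rw [Nat.sub_add_cancel (by omega)]
  exact card_not_isMiddle_add_le (by omega) (by omega)

theorem exists_avoidsRainbow {n k : ℕ} (hk : 2 ≤ k) (hkn : k ≤ n) :
    ∃ 𝓕 : Finset (Finset (Fin n)), #𝓕 = SigmaL n (k - 1) + 2 ∧ AvoidsRainbow n (AC k) 𝓕 := by
  have hmid : ∀ l ∈ middleLevels n (k - 1), 0 < l ∧ l < n := fun l hl => by
    rw [middleLevels, mem_Icc] at hl; omega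
  refine ⟨(insert 0 (insert n (middleLevels n (k - 1)))).biUnion fun l => powersetCard l univ,
    ?_, card, ?_, ?_⟩
  · rw [card_biUnion ((pairwise_disjoint_powersetCard _).set_pairwise _)]
    simp only [card_powersetCard, card_univ, Fintype.card_fin]
    rw [sum_insert (by simpa using ⟨by omega, fun h => (hmid 0 h).1.false⟩),
      sum_insert (fun h => (hmid n h).2.false), ← sigmaL_eq_sum_middleLevels,
      Nat.choose_zero_right, Nat.choose_self]
    ring
  · intro A _ B _ hAB hsub
    exact (card_lt_card (ssubset_of_subset_of_ne hsub hAB)).ne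
  · rintro ⟨f, ⟨hf𝓕, -, hf⟩, hcf⟩
    have hlevel : ∀ p, #(f p) ∈ middleLevels n (k - 1) := by
      intro p
      obtain ⟨q, hqp⟩ := Fintype.exists_ne_of_one_lt_card (α := Fin k)
        (by rw [Fintype.card_fin]; omega) p
      have hp := hf𝓕 p
      simp only [mem_biUnion, mem_insert, mem_powersetCard, subset_univ, true_and] at hp
      obtain ⟨l, hl, hpl⟩ := hp
      rcases hl with rfl | rfl | hl
      · rw [card_eq_zero] at hpl
        exact absurd ((hf p q).mp (hpl ▸ empty_subset _)).symm hqp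
      · have hpu := (card_eq_iff_eq_univ (f p)).mp (hpl.trans (Fintype.card_fin _).symm)
        exact absurd ((hf q p).mp (hpu ▸ subset_univ _)) hqp
      · exact hpl ▸ hl
    have h := card_le_card_of_injOn (s := univ) (fun p => #(f p)) (fun p _ => hlevel p) hcf.injOn
    rw [card_middleLevels, card_univ] at h
    change Fintype.card (Fin k) ≤ k - 1 at h
    rw [Fintype.card_fin] at h
    omega

/-- For every `k ≥ 2` there exists `n₀` such that for all `n ≥ n₀`,
`La_R^*(n, A_k) = Σ(n, k-1) + 2`. -/
theorem statement15 (k : ℕ) (hk : 2 ≤ k) :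
    ∃ n₀ : ℕ, ∀ n, n₀ ≤ n → LaR n (AC k) = SigmaL n (k - 1) + 2 := by
  refine ⟨20000 * k ^ 3, fun n hn => ?_⟩
  have hk3 : k ≤ k ^ 3 := Nat.le_self_pow (by norm_num) k
  obtain ⟨𝓕, h𝓕card, h𝓕⟩ := exists_avoidsRainbow (n := n) hk (by omega)
  refine IsGreatest.csSup_eq ⟨⟨𝓕, h𝓕card, h𝓕⟩, ?_⟩
  rintro _ ⟨𝓖, rfl, h𝓖⟩
  exact card_le_sigmaL_add_two_of_avoidsRainbow hk hn h𝓖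
end

section
/- Let 1 ≤ k ≤ n and let 𝓕 be a k-Sperner family of subsets of [n] that contains a set of size i with i < n/2. Then, as real numbers, |𝓕| ≤ Σ(n,k) − C(n, ⌊(n−k)/2⌋) / C(n, i) + 1. -/
/-!
Grade `𝓕` by height: with no chain of `k + 1` members, every height is below `k` and each
level is an antichain, so the LYM inequality summed over the levels gives
`∑_{F ∈ 𝓕} 1 / C(n, |F|) ≤ k`. Writing `c = C(n, ⌊(n-k)/2⌋)`, the largest
binomial coefficient outside the `k` middle levels,
`|𝓕| = ∑_{F ∈ 𝓕} (1 - c / C(n, |F|)) + c ∑_{F ∈ 𝓕} 1 / C(n, |F|)`.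
The summand `1 - c / C(n, |F|)` is positive exactly on the `k` middle levels, where its total
over all sets is `Σ(n,k) - k c`; the given set of size `i` contributes `1 - c / C(n, i)`
whatever its sign.
-/

open Finset Order

lemma Order.height_lt_of_forall_not_strictMono {β : Type*} [Preorder β] {k : ℕ}
    (h : ∀ g : Fin (k + 1) → β, ¬StrictMono g) (x : β) : height x < k := by
  by_contra! hk
  obtain ⟨p, -, rfl⟩ := exists_series_of_le_height x hk
  exact h p p.strictMono

theorem sum_inv_choose_le_of_forall_not_strictMono {α : Type*} [Fintype α]
    {𝓕 : Finset (Finset α)} {k : ℕ} (h𝓕 : ∀ g : Fin (k + 1) → 𝓕, ¬StrictMono g) :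
    ∑ s ∈ 𝓕, ((Fintype.card α).choose #s : ℝ)⁻¹ ≤ k := by
  classical
  have hlt := height_lt_of_forall_not_strictMono h𝓕
  set ht : 𝓕 → ℕ := fun x => (height x).toNat
  have ht_mem : ∀ x ∈ (univ : Finset 𝓕), ht x ∈ range k := fun x _ => by
    simpa [ht, ← ENat.natCast_lt_natCast, ENat.natCast_toNat (hlt x).ne_top] using hlt x
  have ht_strictMono : StrictMono ht := fun x y hxy => by
    simpa [ht, ← ENat.natCast_lt_natCast, ENat.natCast_toNat (hlt x).ne_top,
      ENat.natCast_toNat (hlt y).ne_top] using height_strictMono hxy ((hlt x).trans (by simp))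
  rw [← sum_coe_sort, ← sum_fiberwise_of_maps_to ht_mem]
  calc ∑ j ∈ range k, ∑ x with ht x = j, ((Fintype.card α).choose #x.1 : ℝ)⁻¹
      ≤ ∑ j ∈ range k, 1 := sum_le_sum fun j _ => by
        refine (sum_map {x | ht x = j} (Function.Embedding.subtype _)
          fun s => ((Fintype.card α).choose #s : ℝ)⁻¹).symm.trans_le
          (lubell_yamamoto_meshalkin_inequality_sum_inv_choose ?_)
        rintro _ hs _ hu hne hsub
        simp only [coe_map, Set.mem_image, mem_coe, mem_filter] at hs hu
        obtain ⟨x, ⟨-, hx⟩, rfl⟩ := hs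
        obtain ⟨y, ⟨-, hy⟩, rfl⟩ := hu
        have := ht_strictMono (lt_of_le_of_ne (show x ≤ y from hsub) (by simpa using hne))
        omega
    _ = k := by simp

lemma Nat.choose_le_choose_of_le_half_s19 {n a b : ℕ} (hab : a ≤ b) (hb : 2 * b ≤ n) :
    n.choose a ≤ n.choose b := by
  induction b, hab using Nat.le_induction with
  | base => rfl
  | succ b _ ih => exact (ih (by omega)).trans (Nat.choose_le_succ_of_lt_half_left (by omega))

lemma Nat.choose_le_choose_of_le_of_le_sub_s19 {n a b : ℕ} (hab : a ≤ b) (hb : b ≤ n - a) :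
    n.choose a ≤ n.choose b := by
  by_cases hb2 : 2 * b ≤ n
  · exact Nat.choose_le_choose_of_le_half_s19 hab hb2
  · rw [← Nat.choose_symm (by omega : b ≤ n)]
    exact Nat.choose_le_choose_of_le_half_s19 (by omega) (by omega)

section MiddleLevels

variable {n k : ℕ}

lemma choose_le_choose_middle_add (hkn : k ≤ n) {i : ℕ} (hi : i ≤ k) :
    n.choose ((n - k) / 2) ≤ n.choose ((n - k) / 2 + i) :=
  Nat.choose_le_choose_of_le_of_le_sub_s19 (by omega) (by omega)

lemma choose_le_choose_middle_of_notMem_Icc {r : ℕ} (hr : r ≤ n)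
    (hrL : r ∉ Icc ((n - k) / 2 + 1) ((n - k) / 2 + k)) :
    n.choose r ≤ n.choose ((n - k) / 2) := by
  rw [mem_Icc] at hrL
  by_cases hrm : r ≤ (n - k) / 2
  · exact Nat.choose_le_choose_of_le_of_le_sub_s19 hrm (by omega)
  · rw [← Nat.choose_symm hr]
    exact Nat.choose_le_choose_of_le_of_le_sub_s19 (by omega) (by omega)

lemma sum_max_choose_sub_choose_middle (hkn : k ≤ n) :
    ∑ r ∈ range (n + 1), max ((n.choose r : ℝ) - n.choose ((n - k) / 2)) 0
      = SigmaL n k - k * n.choose ((n - k) / 2) := by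
  set m := (n - k) / 2
  have hL : Icc (m + 1) (m + k) ⊆ range (n + 1) := fun r hr => by
    rw [mem_Icc] at hr; rw [mem_range]; omega
  calc ∑ r ∈ range (n + 1), max ((n.choose r : ℝ) - n.choose m) 0
      = ∑ r ∈ Icc (m + 1) (m + k), max ((n.choose r : ℝ) - n.choose m) 0 := by
        refine (sum_subset hL fun r hr hrL => max_eq_right ?_).symm
        have hrn : r ≤ n := Nat.lt_succ_iff.1 (mem_range.1 hr)
        exact sub_nonpos.2 (mod_cast choose_le_choose_middle_of_notMem_Icc hrn hrL)
    _ = ∑ i ∈ Icc 1 k, ((n.choose (m + i) : ℝ) - n.choose m) := by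
        rw [← map_add_left_Icc, sum_map]
        refine sum_congr rfl fun i hi => max_eq_left (sub_nonneg.2 ?_)
        exact_mod_cast choose_le_choose_middle_add hkn (mem_Icc.1 hi).2
    _ = SigmaL n k - k * n.choose m := by simp [SigmaL, m, sum_sub_distrib]

end MiddleLevels

lemma Finset.sum_le_add_sum_univ_max_zero {ι M : Type*} [Fintype ι] [AddCommGroup M]
    [LinearOrder M] [IsOrderedAddMonoid M] (f : ι → M) {s : Finset ι} {a : ι} (ha : a ∈ s) :
    ∑ i ∈ s, f i ≤ f a + ∑ i, max (f i) 0 := by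
  classical
  rw [← add_sum_erase s f ha]
  gcongr
  calc ∑ i ∈ s.erase a, f i ≤ ∑ i ∈ s.erase a, max (f i) 0 :=
        sum_le_sum fun i _ => le_max_left _ _
    _ ≤ ∑ i, max (f i) 0 :=
      sum_le_sum_of_subset_of_nonneg (subset_univ _) fun i _ _ => le_max_right _ _

lemma sum_max_one_sub_div_choose_card {α : Type*} [Fintype α] (c : ℝ) :
    ∑ s : Finset α, max (1 - c / (Fintype.card α).choose #s) 0
      = ∑ r ∈ range (Fintype.card α + 1), max (((Fintype.card α).choose r : ℝ) - c) 0 := by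
  rw [← powerset_univ,
    sum_powerset_apply_card fun r => max (1 - c / (Fintype.card α).choose r) 0, card_univ]
  refine sum_congr rfl fun r hr => ?_
  have hpos : (0 : ℝ) < (Fintype.card α).choose r :=
    Nat.cast_pos.2 (Nat.choose_pos (Nat.lt_succ_iff.1 (mem_range.1 hr)))
  rw [nsmul_eq_mul, mul_max_of_nonneg _ _ hpos.le, mul_zero, mul_sub, mul_one,
    mul_div_cancel₀ _ hpos.ne']

theorem card_le_sigmaL_of_sum_inv_choose_le {α : Type*} [Fintype α] {𝓕 : Finset (Finset α)}
    {k : ℕ} (hk : k ≤ Fintype.card α)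
    (h𝓕 : ∑ s ∈ 𝓕, ((Fintype.card α).choose #s : ℝ)⁻¹ ≤ k) {s₀ : Finset α} (hs₀ : s₀ ∈ 𝓕) :
    (#𝓕 : ℝ) ≤ SigmaL (Fintype.card α) k
      - ((Fintype.card α).choose ((Fintype.card α - k) / 2) : ℝ)
        / (Fintype.card α).choose #s₀ + 1 := by
  set n := Fintype.card α
  set c : ℝ := ((n.choose ((n - k) / 2) : ℕ) : ℝ)
  have hsplit : (#𝓕 : ℝ) = ∑ s ∈ 𝓕, (1 - c / n.choose #s)
      + c * ∑ s ∈ 𝓕, (n.choose #s : ℝ)⁻¹ := by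
    simp [sum_sub_distrib, mul_sum, div_eq_mul_inv]
  have hexcess : ∑ s ∈ 𝓕, (1 - c / n.choose #s)
      ≤ (1 - c / n.choose #s₀) + (SigmaL n k - k * c) := by
    refine (sum_le_add_sum_univ_max_zero _ hs₀).trans_eq ?_
    rw [sum_max_one_sub_div_choose_card, sum_max_choose_sub_choose_middle hk]
  linarith [mul_le_mul_of_nonneg_left h𝓕 (Nat.cast_nonneg _ : 0 ≤ c)]

theorem statement19_general (n k i : ℕ) (hkn : k ≤ n)
    (𝓕 : Finset (Finset (Fin n)))
    (hSperner : ¬∃ g : Fin (k + 1) → Finset (Fin n), (∀ j, g j ∈ 𝓕) ∧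
      Function.Injective g ∧ ∀ j l, g j ⊆ g l ∨ g l ⊆ g j)
    (hi : ∃ F ∈ 𝓕, F.card = i) :
    (𝓕.card : ℝ) ≤ (SigmaL n k : ℝ) - (n.choose ((n - k) / 2) : ℝ) / (n.choose i) + 1 := by
  obtain ⟨F, hF, rfl⟩ := hi
  have hLYM := sum_inv_choose_le_of_forall_not_strictMono (𝓕 := 𝓕) (k := k) fun g hg =>
    hSperner ⟨fun j => g j, fun j => (g j).2, Subtype.val_injective.comp hg.injective,
      fun j l => (le_total j l).imp (fun h => hg.monotone h) (fun h => hg.monotone h)⟩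
  simpa using card_le_sigmaL_of_sum_inv_choose_le (by simpa using hkn) hLYM hF

/-- Let `1 ≤ k ≤ n` and let `𝓕` be a `k`-Sperner family of subsets of `[n]`
(no `k+1` distinct pairwise comparable members) containing a set of size `i` with `i < n/2`.
Then `|𝓕| ≤ Σ(n,k) - C(n, ⌊(n-k)/2⌋)/C(n,i) + 1` as real numbers. -/
theorem statement19 (n k i : ℕ) (hk1 : 1 ≤ k) (hkn : k ≤ n)
    (𝓕 : Finset (Finset (Fin n)))
    (hSperner : ¬∃ g : Fin (k + 1) → Finset (Fin n), (∀ j, g j ∈ 𝓕) ∧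
      Function.Injective g ∧ ∀ j l, g j ⊆ g l ∨ g l ⊆ g j)
    (hi : ∃ F ∈ 𝓕, F.card = i) (hin : (i : ℝ) < n / 2) :
    (𝓕.card : ℝ) ≤ (SigmaL n k : ℝ) - (n.choose ((n - k) / 2) : ℝ) / (n.choose i) + 1 :=
  statement19_general n k i hkn 𝓕 hSperner hi
end
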